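/- arXiv:2310.06237 — 3 statements merged into one kernel-verified Lean document; each statement's English description precedes it below -/
import Mathlib

section
/- Let τ̂ be the exact single matching estimator on size-N datasets with outcomes in [0, B], and let β > 0. For a dataset D and x ∈ 𝒳 with counts |T_x|, |C_x|, define for each integer k ≥ 0: R_x^{(k)}(D) = max(|T_x|, |C_x|) + k if min(|T_x|, |C_x|) ≤ k, and R_x^{(k)}(D) = ⌈(max(|T_x|, |C_x|) + k + 1)/(min(|T_x|, |C_x|) − k)⌉ otherwise. Then the β-smooth sensitivity of τ̂ at D is bounded as: S*_{τ̂,β}(D) ≤ max_{k = 0,…,N} e^{−kβ} · (4B/N) · (1 + max_{x ∈ 𝒳} R_x^{(k)}(D)). -/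
/-!
Statement 2: smooth sensitivity bound for the exact single matching estimator:
S*_{τ̂,β}(D) ≤ max_{k=0,…,N} e^{−kβ}·(4B/N)·(1 + max_{x∈𝒳} R_x^{(k)}(D)), where
R_x^{(k)}(D) = max(|T_x|,|C_x|) + k if min(|T_x|,|C_x|) ≤ k, and
R_x^{(k)}(D) = ⌈(max(|T_x|,|C_x|) + k + 1)/(min(|T_x|,|C_x|) − k)⌉ otherwise.
-/


/-- A dataset of size `N`: each record is a treatment indicator, a real outcome,
and a covariate in `X`. -/
abbrev Dataset (N : ℕ) (X : Type) := Fin N → Bool × ℝ × X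

namespace ATE

variable {N : ℕ} {X : Type} [DecidableEq X]

/-- Treated indices with covariate `x`, in increasing index order. -/
def Tlist (D : Dataset N X) (x : X) : List (Fin N) :=
  (List.finRange N).filter fun i => decide ((D i).1 = true ∧ (D i).2.2 = x)

/-- Control indices with covariate `x`, in increasing index order. -/
def Clist (D : Dataset N X) (x : X) : List (Fin N) :=
  (List.finRange N).filter fun i => decide ((D i).1 = false ∧ (D i).2.2 = x)

/-- Observed outcome of individual `i`. -/
def Y (D : Dataset N X) (i : Fin N) : ℝ := (D i).2.1

/-- Individual imputed treatment effect `Ŷᵢ(1) − Ŷᵢ(0)` from greedy exact single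
matching: if the opposite-treatment set in `i`'s stratum is empty, the effect is 0
(both potential outcomes imputed as `Yᵢ`); otherwise the `j`-th treated individual
(0-indexed within its stratum) is matched to the `(j mod |C_x|)`-th control and
vice versa. -/
def effect (D : Dataset N X) (i : Fin N) : ℝ :=
  let x := (D i).2.2
  if (D i).1 then
    let C := Clist D x
    if C.isEmpty then 0
    else Y D i - Y D (C.getD ((Tlist D x).idxOf i % C.length) i)
  else
    let T := Tlist D x
    if T.isEmpty then 0
    else Y D (T.getD ((Clist D x).idxOf i % T.length) i) - Y D i

/-- The exact single matching estimator `τ̂(D) = (1/N) Σᵢ (Ŷᵢ(1) − Ŷᵢ(0))`. -/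
noncomputable def tauHat (D : Dataset N X) : ℝ := (1 / (N : ℝ)) * ∑ i, effect D i

/-- A dataset has outcomes bounded in `[0, B]`. -/
def Valid (B : ℝ) (D : Dataset N X) : Prop := ∀ i, (D i).2.1 ∈ Set.Icc (0 : ℝ) B

/-- Global sensitivity of `f` over size-`N` datasets with outcomes in `[0, B]`:
the supremum of `|f D − f D′|` over neighboring valid pairs (Hamming distance 1). -/
noncomputable def GS (B : ℝ) (f : Dataset N X → ℝ) : ℝ :=
  ⨆ p : {p : Dataset N X × Dataset N X //
        Valid B p.1 ∧ Valid B p.2 ∧ hammingDist p.1 p.2 = 1},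
    |f p.1.1 - f p.1.2|


/-- Local sensitivity of `f` at `D` over size-`N` datasets with outcomes in `[0, B]`:
the supremum of `|f D − f D′|` over valid `D′` at Hamming distance 1 from `D`. -/
noncomputable def LS (B : ℝ) (f : Dataset N X → ℝ) (D : Dataset N X) : ℝ :=
  ⨆ D' : {D' : Dataset N X // Valid B D' ∧ hammingDist D D' = 1}, |f D - f D'.1|

/-- β-smooth sensitivity of `f` at `D` over size-`N` datasets with outcomes in `[0, B]`:
`S*_{f,β}(D) = sup over valid D′ of LS_f(D′)·exp(−β·d(D,D′))`. -/
noncomputable def Sstar (B β : ℝ) (f : Dataset N X → ℝ) (D : Dataset N X) : ℝ :=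
  ⨆ D' : {D' : Dataset N X // Valid B D'},
    LS B f D'.1 * Real.exp (-β * (hammingDist D D'.1 : ℝ))

/-- The quantity `R_x^{(k)}(D)`: with `t = |T_x|`, `c = |C_x|`, it equals
`max t c + k` when `min t c ≤ k`, and `⌈(max t c + k + 1)/(min t c − k)⌉` otherwise
(ceiling division of naturals, written `(a + b − 1)/b`). -/
def Rk (D : Dataset N X) (k : ℕ) (x : X) : ℕ :=
  let t := (Tlist D x).length
  let c := (Clist D x).length
  if min t c ≤ k then max t c + k
  else (max t c + k + 1 + (min t c - k) - 1) / (min t c - k)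

end ATE


section Helpers
open Finset

/-- ceil((c-a)/t) for a < t -/
def mcoef (c t a : ℕ) : ℕ := (c - a + t - 1) / t

lemma mcoef_succ {a t : ℕ} (ha : a < t) (c : ℕ) :
    mcoef (c+1) t a = mcoef c t a + if c % t = a then 1 else 0 := by
  unfold mcoef
  rcases lt_or_ge c a with h | h
  · have h1 : c + 1 - a = 0 := by omega
    have h2 : c - a = 0 := by omega
    have hne : ¬ (c % t = a) := by
      have : c % t = c := Nat.mod_eq_of_lt (lt_trans h ha); omega
    rw [h1, h2, if_neg hne]
    simp [Nat.div_eq_of_lt (by omega : t - 1 < t)]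
  · have h1 : c + 1 - a + t - 1 = (c - a + t - 1) + 1 := by omega
    rw [h1, Nat.succ_div]
    congr 1
    have h2 : c - a + t - 1 + 1 = (c - a) + t := by omega
    rw [h2]
    have : (t ∣ c - a + t) ↔ (t ∣ c - a) := by
      constructor
      · intro hd; have := (Nat.dvd_sub hd (dvd_refl t)); simpa using this
      · intro hd; exact Nat.dvd_add hd (dvd_refl t)
    have h3 : (t ∣ c - a) ↔ c % t = a := by
      rw [← Nat.modEq_iff_dvd' h]
      unfold Nat.ModEq
      rw [Nat.mod_eq_of_lt ha]
      tauto
    simp only [this, h3]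

lemma card_fiber {a t : ℕ} (ha : a < t) (c : ℕ) :
    ((range c).filter (fun q => q % t = a)).card = mcoef c t a := by
  induction c with
  | zero =>
      simp only [Finset.range_zero, Finset.filter_empty, Finset.card_empty, mcoef]
      symm
      apply Nat.div_eq_of_lt
      omega
  | succ n ih =>
      rw [Finset.range_add_one, Finset.filter_insert, mcoef_succ ha]
      by_cases h : n % t = a
      · rw [if_pos h, Finset.card_insert_of_notMem (by simp), ih, if_pos h]
      · rw [if_neg h, ih, if_neg h]
        omega

lemma sum_mcoef {t : ℕ} (ht : 0 < t) (c : ℕ) : ∑ a ∈ range t, mcoef c t a = c := by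
  have := Finset.card_eq_sum_card_fiberwise
    (f := fun q => q % t) (s := range c) (t := range t)
    (fun q _ => Finset.mem_range.mpr (Nat.mod_lt q ht))
  rw [Finset.card_range] at this
  conv_rhs => rw [this]
  apply Finset.sum_congr rfl
  intro a ha
  exact (card_fiber (Finset.mem_range.mp ha) c).symm

lemma sum_mod (f : ℕ → ℝ) {t : ℕ} (ht : 0 < t) (c : ℕ) :
    ∑ q ∈ range c, f (q % t) = ∑ a ∈ range t, (mcoef c t a : ℝ) * f a := by
  rw [← Finset.sum_fiberwise_of_maps_to
    (g := fun q => q % t) (t := range t)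
    (fun q _ => Finset.mem_range.mpr (Nat.mod_lt q ht)) (fun q => f (q % t))]
  apply Finset.sum_congr rfl
  intro a ha
  have : ∀ q ∈ (range c).filter (fun q => q % t = a), f (q % t) = f a := by
    intro q hq; rw [(Finset.mem_filter.mp hq).2]
  rw [Finset.sum_congr rfl this, Finset.sum_const, card_fiber (Finset.mem_range.mp ha) c,
    nsmul_eq_mul]

/-- auxiliary: q*m ≥ x where q = ceil(x/m) -/
lemma mcoef_mul_ge {m : ℕ} (hm : 0 < m) (x : ℕ) : x ≤ m * mcoef x m 0 := by
  unfold mcoef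
  have h1 := Nat.div_add_mod (x - 0 + m - 1) m
  have h2 := Nat.mod_lt (x - 0 + m - 1) hm
  omega

lemma ceil_anti {x m d : ℕ} (hm : 0 < m) (hmd : m ≤ d) :
    (x + d - 1) / d ≤ (x + m - 1) / m := by
  have hd : 0 < d := lt_of_lt_of_le hm hmd
  have h1 : x ≤ m * ((x + m - 1) / m) := by
    have := mcoef_mul_ge hm x; unfold mcoef at this; simpa using this
  rw [Nat.div_le_iff_le_mul_add_pred hd]
  have h2 : m * ((x + m - 1) / m) ≤ d * ((x + m - 1) / m) := Nat.mul_le_mul_right _ hmd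
  omega

lemma mcoef_anti_left {c t a : ℕ} (ht : 0 < t) : mcoef c (t+1) a ≤ mcoef c t a := by
  unfold mcoef
  have h : c - a + (t+1) - 1 = (c - a) + (t + 1) - 1 := rfl
  calc (c - a + (t+1) - 1) / (t+1) ≤ ((c-a) + t - 1) / t := ceil_anti ht (by omega)
    _ = _ := rfl

lemma mcoef_shift {c t a : ℕ} (ht : 0 < t) : mcoef c (t+1) (a+1) ≤ mcoef c t a := by
  unfold mcoef
  rcases le_or_gt c a with h | h
  · have h1 : c - (a+1) = 0 := by omega
    rw [h1]
    have : (0 + (t + 1) - 1) / (t+1) = 0 := Nat.div_eq_of_lt (by omega)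
    rw [this]; exact Nat.zero_le _
  · have h1 : c - (a+1) + (t+1) - 1 = (c - (a+1)) + (t+1) - 1 := rfl
    calc (c - (a+1) + (t+1) - 1) / (t+1) ≤ (c - (a+1) + t - 1) / t := ceil_anti ht (by omega)
      _ ≤ (c - a + t - 1) / t := Nat.div_le_div_right (by omega)

lemma mcoef_anti_right {c t a b : ℕ} (hab : a ≤ b) : mcoef c t b ≤ mcoef c t a :=
  Nat.div_le_div_right (by omega)

noncomputable def Slist (u v : List ℝ) : ℝ :=
  if u.length = 0 ∨ v.length = 0 then 0 else
    (∑ p ∈ range u.length, (u.getD p 0 - v.getD (p % v.length) 0)) +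
    (∑ q ∈ range v.length, (u.getD (q % u.length) 0 - v.getD q 0))

lemma Slist_neg (u v : List ℝ) : Slist u v = - Slist v u := by
  unfold Slist
  by_cases h : u.length = 0 ∨ v.length = 0
  · rw [if_pos h, if_pos (Or.symm h)]; ring
  · rw [if_neg h, if_neg (fun hc => h (Or.symm hc))]
    rw [add_comm, neg_add]
    congr 1 <;> · rw [← Finset.sum_neg_distrib]; apply Finset.sum_congr rfl; intros; ring

lemma sum_Ico_shift (f : ℕ → ℝ) (m n : ℕ) :
    ∑ a ∈ Finset.Ico (m+1) (n+1), f a = ∑ a ∈ Finset.Ico m n, f (a+1) := by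
  rw [Finset.sum_Ico_eq_sum_range, Finset.sum_Ico_eq_sum_range]
  have h : n + 1 - (m + 1) = n - m := by omega
  rw [h]
  exact Finset.sum_congr rfl fun i _ => by rw [Nat.add_right_comm]

lemma sum_coef_insertIdx (m : ℕ → ℝ) (u : List ℝ) (w : ℝ) {p : ℕ} (hp : p ≤ u.length) :
    ∑ a ∈ range (u.length + 1), m a * (u.insertIdx p w).getD a 0
      = (∑ a ∈ range p, m a * u.getD a 0) + m p * w
        + ∑ a ∈ Finset.Ico p u.length, m (a+1) * u.getD a 0 := by
  have hlen : (u.insertIdx p w).length = u.length + 1 := List.length_insertIdx_of_le_length hp w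
  have h1 : range (u.length + 1) = Finset.Ico 0 (u.length + 1) := by
    rw [Finset.range_eq_Ico]
  rw [h1, ← Finset.sum_Ico_consecutive _ (Nat.zero_le p) (by omega : p ≤ u.length + 1),
    Finset.sum_eq_sum_Ico_succ_bot (by omega : p < u.length + 1), sum_Ico_shift,
    ← Finset.range_eq_Ico]
  have e1 : ∀ a ∈ range p, m a * (u.insertIdx p w).getD a 0 = m a * u.getD a 0 := by
    intro a ha
    have halt : a < p := Finset.mem_range.mp ha
    have ha2 : a < u.length := lt_of_lt_of_le halt hp
    rw [List.getD_eq_getElem _ _ (by omega), List.getD_eq_getElem _ _ ha2,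
      List.getElem_insertIdx_of_lt halt]
  have e2 : (u.insertIdx p w).getD p 0 = w := by
    rw [List.getD_eq_getElem _ _ (by omega), List.getElem_insertIdx_self (l := u) (x := w) (i := p) (by omega)]
  have e3 : ∀ a ∈ Finset.Ico p u.length,
      m (a+1) * (u.insertIdx p w).getD (a+1) 0 = m (a+1) * u.getD a 0 := by
    intro a ha
    obtain ⟨h1', h2'⟩ := Finset.mem_Ico.mp ha
    have hk : p + (a - p) < u.length := by omega
    have hae : a + 1 = p + (a - p) + 1 := by omega
    have hae2 : a = p + (a - p) := by omega
    have hval : (u.insertIdx p w).getD (a+1) 0 = u.getD a 0 := by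
      conv_lhs => rw [hae]
      rw [List.getD_eq_getElem _ _ (show p+(a-p)+1 < (u.insertIdx p w).length by omega)]
      have h5 : u.getD a 0 = u.getD (p + (a-p)) 0 := by rw [← hae2]
      rw [h5, List.getD_eq_getElem _ _ hk]
      exact List.getElem_insertIdx_add_succ u w p (a - p) hk
    rw [hval]
  rw [Finset.sum_congr rfl e1, Finset.sum_congr rfl e3, e2]
  ring

lemma sum_split (g : ℕ → ℝ) {p t : ℕ} (hp : p ≤ t) :
    ∑ a ∈ range (t+1), g a
      = (∑ a ∈ range p, g a) + g p + ∑ a ∈ Finset.Ico p t, g (a+1) := by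
  rw [Finset.range_eq_Ico, ← Finset.sum_Ico_consecutive _ (Nat.zero_le p) (by omega : p ≤ t + 1),
    Finset.sum_eq_sum_Ico_succ_bot (by omega : p < t + 1), sum_Ico_shift,
    ← Finset.range_eq_Ico]
  ring

lemma sum_split' (g : ℕ → ℝ) {p t : ℕ} (hp : p ≤ t) :
    ∑ a ∈ range t, g a = (∑ a ∈ range p, g a) + ∑ a ∈ Finset.Ico p t, g a := by
  rw [Finset.range_eq_Ico, ← Finset.sum_Ico_consecutive _ (Nat.zero_le p) hp,
    ← Finset.range_eq_Ico]

lemma abs_sub_le_of_Icc {B a b : ℝ} (ha : a ∈ Set.Icc 0 B) (hb : b ∈ Set.Icc 0 B) :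
    |a - b| ≤ B := by
  obtain ⟨h1, h2⟩ := ha; obtain ⟨h3, h4⟩ := hb
  rw [abs_le]; constructor <;> linarith

lemma Slist_insert_left {B : ℝ} (hB : 0 ≤ B) {u v : List ℝ}
    (hu : ∀ y ∈ u, y ∈ Set.Icc (0:ℝ) B) (hv : ∀ y ∈ v, y ∈ Set.Icc (0:ℝ) B)
    {w : ℝ} (hw : w ∈ Set.Icc (0:ℝ) B) {p : ℕ} (hp : p ≤ u.length) :
    |Slist (u.insertIdx p w) v - Slist u v|
      ≤ 2*B*(1 + (mcoef v.length (u.length+1) 0 : ℝ)) := by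
  set t := u.length with htdef
  set c := v.length with hcdef
  have hlen : (u.insertIdx p w).length = t + 1 := List.length_insertIdx_of_le_length hp w
  have hK0 : (0:ℝ) ≤ (mcoef c (t+1) 0 : ℝ) := Nat.cast_nonneg _
  have hu' : ∀ a, a < t → u.getD a 0 ∈ Set.Icc (0:ℝ) B := by
    intro a ha
    rw [List.getD_eq_getElem _ _ ha]
    exact hu _ (List.getElem_mem ha)
  have hv' : ∀ a, a < c → v.getD a 0 ∈ Set.Icc (0:ℝ) B := by
    intro a ha
    rw [List.getD_eq_getElem _ _ ha]
    exact hv _ (List.getElem_mem ha)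
  by_cases hc : c = 0
  · have h1 : Slist (u.insertIdx p w) v = 0 := by
      unfold Slist; rw [if_pos (Or.inr (by rw [← hcdef, hc]))]
    have h2 : Slist u v = 0 := by
      unfold Slist; rw [if_pos (Or.inr (by rw [← hcdef, hc]))]
    rw [h1, h2]
    simp only [sub_zero, abs_zero]
    positivity
  have hcpos : 0 < c := Nat.pos_of_ne_zero hc
  by_cases ht : t = 0
  · -- u is empty
    have hu0 : u = [] := List.length_eq_zero_iff.mp ht
    have hp0 : p = 0 := by omega
    subst hu0 hp0
    have h2 : Slist [] v = 0 := by unfold Slist; simp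
    have hins : ([] : List ℝ).insertIdx 0 w = [w] := rfl
    rw [h2, hins, sub_zero]
    have hmc : mcoef c (0+1) 0 = c := by
      unfold mcoef
      have : c - 0 + 1 - 1 = c := by omega
      rw [this, Nat.div_one]
    have h3 : Slist [w] v = (w - v.getD (0 % c) 0)
        + ∑ q ∈ range c, (w - v.getD q 0) := by
      unfold Slist
      rw [if_neg (by push_neg; exact ⟨by simp, hc⟩)]
      simp only [List.length_singleton]
      rw [Finset.sum_range_one]
      congr 1
      apply Finset.sum_congr rfl
      intro q _
      rw [Nat.mod_one]
      simp
    rw [h3]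
    have hb1 : |w - v.getD (0 % c) 0| ≤ B :=
      abs_sub_le_of_Icc hw (hv' _ (Nat.mod_lt 0 hcpos))
    have hb2 : |∑ q ∈ range c, (w - v.getD q 0)| ≤ c * B := by
      calc |∑ q ∈ range c, (w - v.getD q 0)| ≤ ∑ q ∈ range c, |w - v.getD q 0| :=
            Finset.abs_sum_le_sum_abs _ _
        _ ≤ ∑ q ∈ range c, B := Finset.sum_le_sum fun q hq =>
            abs_sub_le_of_Icc hw (hv' _ (Finset.mem_range.mp hq))
        _ = c * B := by rw [Finset.sum_const, Finset.card_range, nsmul_eq_mul]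
    calc |(w - v.getD (0 % c) 0) + ∑ q ∈ range c, (w - v.getD q 0)|
        ≤ |w - v.getD (0 % c) 0| + |∑ q ∈ range c, (w - v.getD q 0)| := abs_add_le _ _
      _ ≤ B + c * B := add_le_add hb1 hb2
      _ ≤ 2*B*(1 + (mcoef c (0+1) 0 : ℝ)) := by
          rw [hmc]
          have : (0:ℝ) ≤ c * B := by positivity
          have hcB : (0:ℝ) ≤ (c:ℝ) := Nat.cast_nonneg _
          nlinarith
  · -- main case
    have htpos : 0 < t := Nat.pos_of_ne_zero ht
    have hne1 : ¬((u.insertIdx p w).length = 0 ∨ c = 0) := by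
      push_neg; exact ⟨by omega, hc⟩
    have hne2 : ¬(t = 0 ∨ c = 0) := by push_neg; exact ⟨ht, hc⟩
    have hs' : Slist (u.insertIdx p w) v
        = (∑ a ∈ range (t+1), ((u.insertIdx p w).getD a 0 - v.getD (a % c) 0))
          + (∑ q ∈ range c, ((u.insertIdx p w).getD (q % (t+1)) 0 - v.getD q 0)) := by
      unfold Slist
      rw [if_neg (by rw [hlen]; push_neg; exact ⟨by omega, hc⟩), hlen]
    have hs : Slist u v
        = (∑ a ∈ range t, (u.getD a 0 - v.getD (a % c) 0))
          + (∑ q ∈ range c, (u.getD (q % t) 0 - v.getD q 0)) := by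
      unfold Slist
      rw [if_neg hne2]
    set A3 : ℝ := (∑ q ∈ range c, (u.insertIdx p w).getD (q % (t+1)) 0)
      - (∑ q ∈ range c, u.getD (q % t) 0) with hA3def
    have key : Slist (u.insertIdx p w) v - Slist u v
        = ((∑ a ∈ range (t+1), (u.insertIdx p w).getD a 0) - ∑ a ∈ range t, u.getD a 0)
          - ((∑ a ∈ range (t+1), v.getD (a % c) 0) - ∑ a ∈ range t, v.getD (a % c) 0)
          + A3 := by
      rw [hs', hs, hA3def]
      rw [Finset.sum_sub_distrib, Finset.sum_sub_distrib, Finset.sum_sub_distrib,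
        Finset.sum_sub_distrib]
      ring
    -- E1 = w
    have hE1 : (∑ a ∈ range (t+1), (u.insertIdx p w).getD a 0) - ∑ a ∈ range t, u.getD a 0
        = w := by
      have h1 := sum_coef_insertIdx (fun _ => (1:ℝ)) u w hp
      simp only [one_mul] at h1
      rw [h1, sum_split' (fun a => u.getD a 0) hp]
      ring
    -- E2 = v.getD (t % c) 0
    have hE2 : (∑ a ∈ range (t+1), v.getD (a % c) 0) - ∑ a ∈ range t, v.getD (a % c) 0
        = v.getD (t % c) 0 := by
      rw [Finset.sum_range_succ]; ring
    have hA3eq : A3 = (∑ a ∈ range p, ((mcoef c (t+1) a : ℝ) - (mcoef c t a : ℝ)) * u.getD a 0)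
        + (mcoef c (t+1) p : ℝ) * w
        + ∑ a ∈ Finset.Ico p t, ((mcoef c (t+1) (a+1) : ℝ) - (mcoef c t a : ℝ)) * u.getD a 0 := by
      rw [hA3def]
      rw [sum_mod (fun a => (u.insertIdx p w).getD a 0) (Nat.succ_pos t) c]
      rw [sum_mod (fun a => u.getD a 0) htpos c]
      rw [sum_coef_insertIdx (fun a => (mcoef c (t+1) a : ℝ)) u w hp]
      rw [sum_split' (fun a => (mcoef c t a : ℝ) * u.getD a 0) hp]
      simp only [sub_mul]
      rw [Finset.sum_sub_distrib, Finset.sum_sub_distrib]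
      ring
    set P1 := ∑ a ∈ range p, (mcoef c (t+1) a : ℝ) with hP1
    set P2 := ∑ a ∈ Finset.Ico p t, (mcoef c (t+1) (a+1) : ℝ) with hP2
    set Q1 := ∑ a ∈ range p, (mcoef c t a : ℝ) with hQ1
    set Q2 := ∑ a ∈ Finset.Ico p t, (mcoef c t a : ℝ) with hQ2
    set K := (mcoef c (t+1) p : ℝ) with hK
    have hid1 : P1 + K + P2 = (c : ℝ) := by
      rw [hP1, hK, hP2, ← sum_split (fun a => (mcoef c (t+1) a : ℝ)) hp, ← Nat.cast_sum]
      rw [sum_mcoef (Nat.succ_pos t) c]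
    have hid2 : Q1 + Q2 = (c : ℝ) := by
      rw [hQ1, hQ2, ← sum_split' (fun a => (mcoef c t a : ℝ)) hp, ← Nat.cast_sum]
      rw [sum_mcoef htpos c]
    have hcoef1 : ∀ a ∈ range p, ((mcoef c (t+1) a : ℝ) - (mcoef c t a : ℝ)) ≤ 0 :=
      fun a _ => sub_nonpos.mpr (Nat.cast_le.mpr (mcoef_anti_left htpos))
    have hcoef2 : ∀ a ∈ Finset.Ico p t,
        ((mcoef c (t+1) (a+1) : ℝ) - (mcoef c t a : ℝ)) ≤ 0 :=
      fun a _ => sub_nonpos.mpr (Nat.cast_le.mpr (mcoef_shift htpos))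
    have huIcc : ∀ a ∈ Finset.Ico p t, u.getD a 0 ∈ Set.Icc (0:ℝ) B :=
      fun a ha => hu' a (Finset.mem_Ico.mp ha).2
    have huIcc' : ∀ a ∈ range p, u.getD a 0 ∈ Set.Icc (0:ℝ) B :=
      fun a ha => hu' a (lt_of_lt_of_le (Finset.mem_range.mp ha) hp)
    have hKnn : (0:ℝ) ≤ K := Nat.cast_nonneg _
    have hub : A3 ≤ K * B := by
      rw [hA3eq]
      have h1 : ∑ a ∈ range p, ((mcoef c (t+1) a : ℝ) - (mcoef c t a : ℝ)) * u.getD a 0 ≤ 0 :=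
        Finset.sum_nonpos fun a ha =>
          mul_nonpos_iff.mpr (Or.inr ⟨hcoef1 a ha, (huIcc' a ha).1⟩)
      have h2 : ∑ a ∈ Finset.Ico p t,
          ((mcoef c (t+1) (a+1) : ℝ) - (mcoef c t a : ℝ)) * u.getD a 0 ≤ 0 :=
        Finset.sum_nonpos fun a ha =>
          mul_nonpos_iff.mpr (Or.inr ⟨hcoef2 a ha, (huIcc a ha).1⟩)
      have h3 : K * w ≤ K * B := mul_le_mul_of_nonneg_left hw.2 hKnn
      linarith
    have hlb : -(K * B) ≤ A3 := by
      rw [hA3eq]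
      have h1 : ∑ a ∈ range p, ((mcoef c (t+1) a : ℝ) - (mcoef c t a : ℝ)) * B
          ≤ ∑ a ∈ range p, ((mcoef c (t+1) a : ℝ) - (mcoef c t a : ℝ)) * u.getD a 0 :=
        Finset.sum_le_sum fun a ha =>
          mul_le_mul_of_nonpos_left (huIcc' a ha).2 (hcoef1 a ha)
      have h2 : ∑ a ∈ Finset.Ico p t,
            ((mcoef c (t+1) (a+1) : ℝ) - (mcoef c t a : ℝ)) * B
          ≤ ∑ a ∈ Finset.Ico p t,
            ((mcoef c (t+1) (a+1) : ℝ) - (mcoef c t a : ℝ)) * u.getD a 0 :=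
        Finset.sum_le_sum fun a ha =>
          mul_le_mul_of_nonpos_left (huIcc a ha).2 (hcoef2 a ha)
      have h3 : (0:ℝ) ≤ K * w := mul_nonneg hKnn hw.1
      have e1 : ∑ a ∈ range p, ((mcoef c (t+1) a : ℝ) - (mcoef c t a : ℝ)) * B
          = (P1 - Q1) * B := by
        rw [← Finset.sum_mul, Finset.sum_sub_distrib]
      have e2 : ∑ a ∈ Finset.Ico p t,
            ((mcoef c (t+1) (a+1) : ℝ) - (mcoef c t a : ℝ)) * B = (P2 - Q2) * B := by
        rw [← Finset.sum_mul, Finset.sum_sub_distrib]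
      have hsum : (P1 - Q1) * B + (P2 - Q2) * B = -(K*B) := by
        have h : P1 + P2 - (Q1 + Q2) = -K := by linarith
        calc (P1 - Q1) * B + (P2 - Q2) * B = (P1 + P2 - (Q1 + Q2)) * B := by ring
          _ = (-K) * B := by rw [h]
          _ = -(K*B) := by ring
      rw [e1] at h1; rw [e2] at h2
      linarith
    have habs3 : |A3| ≤ K * B := abs_le.mpr ⟨by linarith, hub⟩
    have hKle : K ≤ (mcoef c (t+1) 0 : ℝ) :=
      Nat.cast_le.mpr (mcoef_anti_right (Nat.zero_le p))
    rw [key, hE1, hE2]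
    calc |w - v.getD (t % c) 0 + A3| ≤ |w - v.getD (t % c) 0| + |A3| := abs_add_le _ _
      _ ≤ B + K * B := add_le_add
          (abs_sub_le_of_Icc hw (hv' _ (Nat.mod_lt t hcpos))) habs3
      _ ≤ 2*B*(1 + (mcoef c (t+1) 0 : ℝ)) := by
          nlinarith [mul_le_mul_of_nonneg_right hKle hB, mul_nonneg hB hK0]

lemma Slist_insert_right {B : ℝ} (hB : 0 ≤ B) {u v : List ℝ}
    (hu : ∀ y ∈ u, y ∈ Set.Icc (0:ℝ) B) (hv : ∀ y ∈ v, y ∈ Set.Icc (0:ℝ) B)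
    {w : ℝ} (hw : w ∈ Set.Icc (0:ℝ) B) {p : ℕ} (hp : p ≤ v.length) :
    |Slist u (v.insertIdx p w) - Slist u v|
      ≤ 2*B*(1 + (mcoef u.length (v.length+1) 0 : ℝ)) := by
  rw [Slist_neg u (v.insertIdx p w), Slist_neg u v,
    show -Slist (v.insertIdx p w) u - -Slist v u = -(Slist (v.insertIdx p w) u - Slist v u)
      by ring, abs_neg]
  exact Slist_insert_left hB hv hu hw hp

lemma map_insertIdx {α β : Type*} (f : α → β) (a : α) :
    ∀ (p : ℕ) (l : List α), p ≤ l.length →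
      (l.insertIdx p a).map f = (l.map f).insertIdx p (f a)
  | 0, l, _ => rfl
  | (p+1), [], h => by simp at h
  | (p+1), (x :: xs), h => by
      rw [List.insertIdx_succ_cons, List.map_cons, List.map_cons,
        List.insertIdx_succ_cons, map_insertIdx f a p xs (by simpa using h)]

lemma filter_insertIdx {α : Type*} [DecidableEq α] (p : α → Bool) :
    ∀ (l : List α) (r : α), l.Nodup → r ∈ l → p r = true →
      ∃ j, j ≤ (l.filter (fun i => p i && decide (i ≠ r))).length ∧
        l.filter p = (l.filter (fun i => p i && decide (i ≠ r))).insertIdx j r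
  | [], r, _, hr, _ => absurd hr List.not_mem_nil
  | (a :: l), r, hnd, hr, hpr => by
      have hnd1 : a ∉ l := (List.nodup_cons.mp hnd).1
      have hnd2 : l.Nodup := (List.nodup_cons.mp hnd).2
      by_cases hra : r = a
      · subst hra
        have h1 : (r :: l).filter p = r :: l.filter p := by
          rw [List.filter_cons_of_pos hpr]
        have h2 : (r :: l).filter (fun i => p i && decide (i ≠ r))
            = l.filter (fun i => p i && decide (i ≠ r)) := by
          apply List.filter_cons_of_neg
          simp
        have h3 : l.filter (fun i => p i && decide (i ≠ r)) = l.filter p := by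
          apply List.filter_congr
          intro i hi
          have : i ≠ r := fun he => hnd1 (he ▸ hi)
          simp [this]
        refine ⟨0, Nat.zero_le _, ?_⟩
        rw [h1, h2, h3, List.insertIdx_zero]
      · have hrl : r ∈ l := by
          rcases List.mem_cons.mp hr with h | h
          · exact absurd h hra
          · exact h
        obtain ⟨j, hj, hEq⟩ := filter_insertIdx p l r hnd2 hrl hpr
        by_cases hpa : p a = true
        · have har : (a ≠ r) := fun he => hra he.symm
          have h1 : (a :: l).filter p = a :: l.filter p := List.filter_cons_of_pos hpa
          have h2 : (a :: l).filter (fun i => p i && decide (i ≠ r))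
              = a :: l.filter (fun i => p i && decide (i ≠ r)) := by
            apply List.filter_cons_of_pos
            simp [hpa, har]
          refine ⟨j+1, by rw [h2, List.length_cons]; omega, ?_⟩
          rw [h1, h2, List.insertIdx_succ_cons, hEq]
        · have h1 : (a :: l).filter p = l.filter p :=
            List.filter_cons_of_neg (by simpa using hpa)
          have h2 : (a :: l).filter (fun i => p i && decide (i ≠ r))
              = l.filter (fun i => p i && decide (i ≠ r)) := by
            apply List.filter_cons_of_neg
            simp [hpa]
          exact ⟨j, by rw [h2]; exact hj, by rw [h1, h2, hEq]⟩

lemma list_sum_map {ι : Type*} (f : ι → ℝ) (l : List ι) (d : ι) :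
    (l.map f).sum = ∑ q ∈ range l.length, f (l.getD q d) := by
  induction l with
  | nil => simp
  | cons a l ih =>
      rw [List.map_cons, List.sum_cons, List.length_cons, Finset.sum_range_succ']
      simp only [List.getD_cons_succ, List.getD_cons_zero]
      rw [ih]
      ring

end Helpers

namespace ATE

open Finset

variable {N : ℕ} {X : Type} [DecidableEq X]

/-- outcomes of treated individuals in stratum `x` -/
noncomputable def yTl (D : Dataset N X) (x : X) : List ℝ := (Tlist D x).map (Y D)

/-- outcomes of control individuals in stratum `x` -/
noncomputable def yCl (D : Dataset N X) (x : X) : List ℝ := (Clist D x).map (Y D)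

/-- treated indices in stratum `x` other than `r` -/
def bT (D : Dataset N X) (r : Fin N) (x : X) : List (Fin N) :=
  (List.finRange N).filter fun i =>
    (decide ((D i).1 = true ∧ (D i).2.2 = x)) && decide (i ≠ r)

def bC (D : Dataset N X) (r : Fin N) (x : X) : List (Fin N) :=
  (List.finRange N).filter fun i =>
    (decide ((D i).1 = false ∧ (D i).2.2 = x)) && decide (i ≠ r)

noncomputable def ybT (D : Dataset N X) (r : Fin N) (x : X) : List ℝ := (bT D r x).map (Y D)
noncomputable def ybC (D : Dataset N X) (r : Fin N) (x : X) : List ℝ := (bC D r x).map (Y D)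

lemma Tlist_nodup (D : Dataset N X) (x : X) : (Tlist D x).Nodup :=
  (List.nodup_finRange N).filter _

lemma Clist_nodup (D : Dataset N X) (x : X) : (Clist D x).Nodup :=
  (List.nodup_finRange N).filter _

lemma yTl_mem_Icc {B : ℝ} {D : Dataset N X} (hD : Valid B D) (x : X) :
    ∀ y ∈ yTl D x, y ∈ Set.Icc (0:ℝ) B := by
  intro y hy
  obtain ⟨i, _, rfl⟩ := List.mem_map.mp hy
  exact hD i

lemma yCl_mem_Icc {B : ℝ} {D : Dataset N X} (hD : Valid B D) (x : X) :
    ∀ y ∈ yCl D x, y ∈ Set.Icc (0:ℝ) B := by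
  intro y hy
  obtain ⟨i, _, rfl⟩ := List.mem_map.mp hy
  exact hD i

lemma ybT_mem_Icc {B : ℝ} {D : Dataset N X} (hD : Valid B D) (r : Fin N) (x : X) :
    ∀ y ∈ ybT D r x, y ∈ Set.Icc (0:ℝ) B := by
  intro y hy
  obtain ⟨i, _, rfl⟩ := List.mem_map.mp hy
  exact hD i

lemma ybC_mem_Icc {B : ℝ} {D : Dataset N X} (hD : Valid B D) (r : Fin N) (x : X) :
    ∀ y ∈ ybC D r x, y ∈ Set.Icc (0:ℝ) B := by
  intro y hy
  obtain ⟨i, _, rfl⟩ := List.mem_map.mp hy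
  exact hD i

lemma Tlist_eq_bT {D : Dataset N X} {r : Fin N} {x : X}
    (h : ¬((D r).1 = true ∧ (D r).2.2 = x)) : Tlist D x = bT D r x := by
  unfold Tlist bT
  apply List.filter_congr
  intro i _
  by_cases hir : i = r
  · subst hir
    simp [h]
  · simp [hir]

lemma Clist_eq_bC {D : Dataset N X} {r : Fin N} {x : X}
    (h : ¬((D r).1 = false ∧ (D r).2.2 = x)) : Clist D x = bC D r x := by
  unfold Clist bC
  apply List.filter_congr
  intro i _
  by_cases hir : i = r
  · subst hir
    simp [h]
  · simp [hir]

lemma Tlist_insert {D : Dataset N X} {r : Fin N} {x : X}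
    (h : (D r).1 = true ∧ (D r).2.2 = x) :
    ∃ j, j ≤ (bT D r x).length ∧ Tlist D x = (bT D r x).insertIdx j r :=
  filter_insertIdx _ (List.finRange N) r (List.nodup_finRange N)
    (List.mem_finRange r) (decide_eq_true h)

lemma Clist_insert {D : Dataset N X} {r : Fin N} {x : X}
    (h : (D r).1 = false ∧ (D r).2.2 = x) :
    ∃ j, j ≤ (bC D r x).length ∧ Clist D x = (bC D r x).insertIdx j r :=
  filter_insertIdx _ (List.finRange N) r (List.nodup_finRange N)
    (List.mem_finRange r) (decide_eq_true h)

lemma ybT_congr {D₁ D₂ : Dataset N X} {r : Fin N}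
    (hr : ∀ i, i ≠ r → D₁ i = D₂ i) (x : X) : ybT D₁ r x = ybT D₂ r x := by
  unfold ybT bT
  have hfil : (List.finRange N).filter
        (fun i => (decide ((D₁ i).1 = true ∧ (D₁ i).2.2 = x)) && decide (i ≠ r))
      = (List.finRange N).filter
        (fun i => (decide ((D₂ i).1 = true ∧ (D₂ i).2.2 = x)) && decide (i ≠ r)) := by
    apply List.filter_congr
    intro i _
    by_cases hir : i = r
    · subst hir; simp
    · rw [hr i hir]
  rw [hfil]
  apply List.map_congr_left
  intro i hi
  have := List.of_mem_filter hi
  have hir : i ≠ r := by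
    simp only [Bool.and_eq_true, decide_eq_true_eq] at this
    exact this.2
  unfold Y
  rw [hr i hir]

lemma ybC_congr {D₁ D₂ : Dataset N X} {r : Fin N}
    (hr : ∀ i, i ≠ r → D₁ i = D₂ i) (x : X) : ybC D₁ r x = ybC D₂ r x := by
  unfold ybC bC
  have hfil : (List.finRange N).filter
        (fun i => (decide ((D₁ i).1 = false ∧ (D₁ i).2.2 = x)) && decide (i ≠ r))
      = (List.finRange N).filter
        (fun i => (decide ((D₂ i).1 = false ∧ (D₂ i).2.2 = x)) && decide (i ≠ r)) := by
    apply List.filter_congr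
    intro i _
    by_cases hir : i = r
    · subst hir; simp
    · rw [hr i hir]
  rw [hfil]
  apply List.map_congr_left
  intro i hi
  have := List.of_mem_filter hi
  have hir : i ≠ r := by
    simp only [Bool.and_eq_true, decide_eq_true_eq] at this
    exact this.2
  unfold Y
  rw [hr i hir]

lemma Tlist_mem_iff {D : Dataset N X} {x : X} {i : Fin N} :
    i ∈ Tlist D x ↔ ((D i).1 = true ∧ (D i).2.2 = x) := by
  unfold Tlist
  rw [List.mem_filter]
  simp [List.mem_finRange]

lemma Clist_mem_iff {D : Dataset N X} {x : X} {i : Fin N} :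
    i ∈ Clist D x ↔ ((D i).1 = false ∧ (D i).2.2 = x) := by
  unfold Clist
  rw [List.mem_filter]
  simp [List.mem_finRange]

lemma Tpart (D : Dataset N X) (hN : 0 < N) (x : X) :
    ∑ i ∈ (Tlist D x).toFinset, effect D i
      = if (Clist D x).length = 0 then 0
        else ∑ p ∈ range (Tlist D x).length,
          ((yTl D x).getD p 0 - (yCl D x).getD (p % (yCl D x).length) 0) := by
  rw [List.sum_toFinset _ (Tlist_nodup D x),
    list_sum_map (effect D) (Tlist D x) ⟨0, hN⟩]
  have hgm : ∀ p (hp : p < (Tlist D x).length),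
      ((Tlist D x).getD p ⟨0, hN⟩) = (Tlist D x).get ⟨p, hp⟩ :=
    fun p hp => List.getD_eq_getElem _ _ hp
  by_cases hc : (Clist D x).length = 0
  · rw [if_pos hc]
    apply Finset.sum_eq_zero
    intro p hp
    have hp' := Finset.mem_range.mp hp
    rw [hgm p hp']
    set i := (Tlist D x).get ⟨p, hp'⟩ with hi
    have him : i ∈ Tlist D x := List.get_mem _ _
    obtain ⟨hib, hix⟩ := Tlist_mem_iff.mp him
    have hCnil : Clist D ((D i).2.2) = [] := by
      rw [hix]; exact List.length_eq_zero_iff.mp hc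
    simp [effect, hib, hCnil]
  · rw [if_neg hc]
    have hcpos : 0 < (Clist D x).length := Nat.pos_of_ne_zero hc
    apply Finset.sum_congr rfl
    intro p hp
    have hp' := Finset.mem_range.mp hp
    rw [hgm p hp']
    set i := (Tlist D x).get ⟨p, hp'⟩ with hi
    have him : i ∈ Tlist D x := List.get_mem _ _
    obtain ⟨hib, hix⟩ := Tlist_mem_iff.mp him
    have hne : Clist D x ≠ [] := by
      intro hnil; rw [hnil] at hcpos; simp at hcpos
    have hCne : (Clist D ((D i).2.2)).isEmpty = false := by
      rw [hix]
      simp [hne]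
    have hidx : List.idxOf i (Tlist D x) = p :=
      List.get_idxOf (Tlist_nodup D x) ⟨p, hp'⟩
    have hYT : Y D i = (yTl D x).getD p 0 := by
      unfold yTl
      rw [List.getD_eq_getElem _ _ (by rw [List.length_map]; exact hp'),
        List.getElem_map, hi]
      rfl
    have hlC : (yCl D x).length = (Clist D x).length := List.length_map _
    have hmod : p % (Clist D x).length < (Clist D x).length := Nat.mod_lt p hcpos
    have hYC : Y D ((Clist D x).getD (p % (Clist D x).length) i)
        = (yCl D x).getD (p % (yCl D x).length) 0 := by
      rw [hlC]
      unfold yCl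
      rw [List.getD_eq_getElem ((Clist D x).map (Y D)) _
          (by rw [List.length_map]; exact hmod),
        List.getElem_map,
        List.getD_eq_getElem _ _ hmod]
    simp only [effect, hib, if_true, hCne, Bool.false_eq_true, if_false]
    rw [hix, hidx, ← hYT, ← hYC]

lemma Cpart (D : Dataset N X) (hN : 0 < N) (x : X) :
    ∑ i ∈ (Clist D x).toFinset, effect D i
      = if (Tlist D x).length = 0 then 0
        else ∑ q ∈ range (Clist D x).length,
          ((yTl D x).getD (q % (yTl D x).length) 0 - (yCl D x).getD q 0) := by
  rw [List.sum_toFinset _ (Clist_nodup D x),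
    list_sum_map (effect D) (Clist D x) ⟨0, hN⟩]
  have hgm : ∀ q (hq : q < (Clist D x).length),
      ((Clist D x).getD q ⟨0, hN⟩) = (Clist D x).get ⟨q, hq⟩ :=
    fun q hq => List.getD_eq_getElem _ _ hq
  by_cases ht : (Tlist D x).length = 0
  · rw [if_pos ht]
    apply Finset.sum_eq_zero
    intro q hq
    have hq' := Finset.mem_range.mp hq
    rw [hgm q hq']
    set i := (Clist D x).get ⟨q, hq'⟩ with hi
    have him : i ∈ Clist D x := List.get_mem _ _
    obtain ⟨hib, hix⟩ := Clist_mem_iff.mp him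
    have hTnil : Tlist D ((D i).2.2) = [] := by
      rw [hix]; exact List.length_eq_zero_iff.mp ht
    simp [effect, hib, hTnil]
  · rw [if_neg ht]
    have htpos : 0 < (Tlist D x).length := Nat.pos_of_ne_zero ht
    apply Finset.sum_congr rfl
    intro q hq
    have hq' := Finset.mem_range.mp hq
    rw [hgm q hq']
    set i := (Clist D x).get ⟨q, hq'⟩ with hi
    have him : i ∈ Clist D x := List.get_mem _ _
    obtain ⟨hib, hix⟩ := Clist_mem_iff.mp him
    have hne : Tlist D x ≠ [] := by
      intro hnil; rw [hnil] at htpos; simp at htpos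
    have hTne : (Tlist D ((D i).2.2)).isEmpty = false := by
      rw [hix]
      simp [hne]
    have hidx : List.idxOf i (Clist D x) = q :=
      List.get_idxOf (Clist_nodup D x) ⟨q, hq'⟩
    have hYC : Y D i = (yCl D x).getD q 0 := by
      unfold yCl
      rw [List.getD_eq_getElem _ _ (by rw [List.length_map]; exact hq'),
        List.getElem_map, hi]
      rfl
    have hlT : (yTl D x).length = (Tlist D x).length := List.length_map _
    have hmod : q % (Tlist D x).length < (Tlist D x).length := Nat.mod_lt q htpos
    have hYT : Y D ((Tlist D x).getD (q % (Tlist D x).length) i)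
        = (yTl D x).getD (q % (yTl D x).length) 0 := by
      rw [hlT]
      unfold yTl
      rw [List.getD_eq_getElem ((Tlist D x).map (Y D)) _
          (by rw [List.length_map]; exact hmod),
        List.getElem_map,
        List.getD_eq_getElem _ _ hmod]
    simp only [effect, hib, Bool.false_eq_true, if_false, hTne]
    rw [hix, hidx, ← hYC, ← hYT]

lemma effect_sum [Fintype X] (D : Dataset N X) (hN : 0 < N) :
    ∑ i, effect D i = ∑ x : X, Slist (yTl D x) (yCl D x) := by
  rw [← Finset.sum_fiberwise_of_maps_to
    (g := fun i => (D i).2.2) (t := Finset.univ)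
    (fun i _ => Finset.mem_univ ((D i).2.2)) (effect D)]
  apply Finset.sum_congr rfl
  intro x _
  have hsplit : Finset.univ.filter (fun i => (D i).2.2 = x)
      = (Tlist D x).toFinset ∪ (Clist D x).toFinset := by
    ext i
    simp only [Finset.mem_filter, Finset.mem_univ, true_and, Finset.mem_union,
      List.mem_toFinset, Tlist_mem_iff, Clist_mem_iff]
    cases h : (D i).1 <;> tauto
  have hdisj : Disjoint (Tlist D x).toFinset (Clist D x).toFinset := by
    rw [Finset.disjoint_left]
    intro i hi1 hi2
    rw [List.mem_toFinset, Tlist_mem_iff] at hi1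
    rw [List.mem_toFinset, Clist_mem_iff] at hi2
    rw [hi1.1] at hi2
    exact absurd hi2.1 (by simp)
  rw [hsplit, Finset.sum_union hdisj, Tpart D hN x, Cpart D hN x]
  have hlT : (yTl D x).length = (Tlist D x).length := List.length_map _
  have hlC : (yCl D x).length = (Clist D x).length := List.length_map _
  unfold Slist
  by_cases hc : (Clist D x).length = 0
  · rw [if_pos hc, if_pos (Or.inr (by rw [hlC]; exact hc))]
    by_cases ht : (Tlist D x).length = 0
    · rw [if_pos ht]; ring
    · rw [if_neg ht]
      rw [show range (Clist D x).length = (∅ : Finset ℕ) by rw [hc]; rfl]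
      rw [Finset.sum_empty]
      ring
  · rw [if_neg hc]
    by_cases ht : (Tlist D x).length = 0
    · rw [if_pos ht, if_pos (Or.inl (by rw [hlT]; exact ht))]
      rw [show range (Tlist D x).length = (∅ : Finset ℕ) by rw [ht]; rfl]
      rw [Finset.sum_empty]
      ring
    · rw [if_neg ht, if_neg (by push_neg; rw [hlT, hlC]; exact ⟨ht, hc⟩)]
      rw [hlT, hlC]

lemma stratum_diff {B : ℝ} (hB : 0 ≤ B) {D : Dataset N X} (hD : Valid B D)
    (r : Fin N) (x : X) :
    |Slist (yTl D x) (yCl D x) - Slist (ybT D r x) (ybC D r x)|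
      ≤ if (D r).2.2 = x then
          (if (D r).1 then 2*B*(1 + (mcoef (yCl D x).length (yTl D x).length 0 : ℝ))
           else 2*B*(1 + (mcoef (yTl D x).length (yCl D x).length 0 : ℝ)))
        else 0 := by
  by_cases hx : (D r).2.2 = x
  · rw [if_pos hx]
    by_cases hb : (D r).1 = true
    · rw [if_pos hb]
      have hC : Clist D x = bC D r x := Clist_eq_bC (by rw [hb]; simp)
      obtain ⟨j, hj, hT⟩ := Tlist_insert ⟨hb, hx⟩
      have hj' : j ≤ (ybT D r x).length := by
        unfold ybT; rw [List.length_map]; exact hj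
      have hyT : yTl D x = (ybT D r x).insertIdx j (Y D r) := by
        unfold yTl ybT
        rw [hT, map_insertIdx _ _ _ _ hj]
      have hyC : yCl D x = ybC D r x := by unfold yCl ybC; rw [hC]
      have hlT : (yTl D x).length = (ybT D r x).length + 1 := by
        rw [hyT, List.length_insertIdx_of_le_length hj' _]
      have hbd := Slist_insert_left hB (ybT_mem_Icc hD r x) (ybC_mem_Icc hD r x)
        (hD r) hj'
      rw [hyT, hyC, List.length_insertIdx_of_le_length hj' _]
      exact hbd
    · rw [if_neg hb]
      have hbf : (D r).1 = false := by
        cases h : (D r).1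
        · rfl
        · exact absurd h hb
      have hT : Tlist D x = bT D r x := Tlist_eq_bT (by rw [hbf]; simp)
      obtain ⟨j, hj, hC⟩ := Clist_insert ⟨hbf, hx⟩
      have hj' : j ≤ (ybC D r x).length := by
        unfold ybC; rw [List.length_map]; exact hj
      have hyC : yCl D x = (ybC D r x).insertIdx j (Y D r) := by
        unfold yCl ybC
        rw [hC, map_insertIdx _ _ _ _ hj]
      have hyT : yTl D x = ybT D r x := by unfold yTl ybT; rw [hT]
      have hlC : (yCl D x).length = (ybC D r x).length + 1 := by
        rw [hyC, List.length_insertIdx_of_le_length hj' _]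
      have hbd := Slist_insert_right hB (ybT_mem_Icc hD r x) (ybC_mem_Icc hD r x)
        (hD r) hj'
      rw [hyT, hyC, List.length_insertIdx_of_le_length hj' _]
      exact hbd
  · rw [if_neg hx]
    have hT : Tlist D x = bT D r x := Tlist_eq_bT (fun hc => hx hc.2)
    have hC : Clist D x = bC D r x := Clist_eq_bC (fun hc => hx hc.2)
    have hyT : yTl D x = ybT D r x := by unfold yTl ybT; rw [hT]
    have hyC : yCl D x = ybC D r x := by unfold yCl ybC; rw [hC]
    rw [hyT, hyC, sub_self, abs_zero]

lemma tau_diff [Fintype X] {B : ℝ} (hN : 0 < N) (hB : 0 ≤ B)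
    {D₁ D₂ : Dataset N X} (h1 : Valid B D₁) (h2 : Valid B D₂)
    (r : Fin N) (hr : ∀ i, i ≠ r → D₁ i = D₂ i) (G : ℝ) (hG : 0 ≤ G)
    (hG1 : (if (D₁ r).1
        then (mcoef (yCl D₁ ((D₁ r).2.2)).length (yTl D₁ ((D₁ r).2.2)).length 0 : ℝ)
        else (mcoef (yTl D₁ ((D₁ r).2.2)).length (yCl D₁ ((D₁ r).2.2)).length 0 : ℝ)) ≤ G)
    (hG2 : (if (D₂ r).1
        then (mcoef (yCl D₂ ((D₂ r).2.2)).length (yTl D₂ ((D₂ r).2.2)).length 0 : ℝ)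
        else (mcoef (yTl D₂ ((D₂ r).2.2)).length (yCl D₂ ((D₂ r).2.2)).length 0 : ℝ)) ≤ G) :
    |tauHat D₁ - tauHat D₂| ≤ 4*B/(N:ℝ)*(1+G) := by
  have hNpos : (0:ℝ) < (N:ℝ) := by exact_mod_cast hN
  have h2BG : (0:ℝ) ≤ 2*B*(1+G) := by positivity
  have hptw : ∀ x : X,
      |Slist (yTl D₁ x) (yCl D₁ x) - Slist (yTl D₂ x) (yCl D₂ x)|
        ≤ (if (D₁ r).2.2 = x then 2*B*(1+G) else 0)
          + (if (D₂ r).2.2 = x then 2*B*(1+G) else 0) := by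
    intro x
    have hs1 := stratum_diff hB h1 r x
    have hs2 := stratum_diff hB h2 r x
    rw [← ybT_congr hr x, ← ybC_congr hr x] at hs2
    have htri : |Slist (yTl D₁ x) (yCl D₁ x) - Slist (yTl D₂ x) (yCl D₂ x)|
        ≤ |Slist (yTl D₁ x) (yCl D₁ x) - Slist (ybT D₁ r x) (ybC D₁ r x)|
          + |Slist (yTl D₂ x) (yCl D₂ x) - Slist (ybT D₁ r x) (ybC D₁ r x)| := by
      have := abs_sub_le (Slist (yTl D₁ x) (yCl D₁ x))
        (Slist (ybT D₁ r x) (ybC D₁ r x)) (Slist (yTl D₂ x) (yCl D₂ x))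
      rwa [abs_sub_comm (Slist (ybT D₁ r x) (ybC D₁ r x))] at this
    have hb1 : (if (D₁ r).2.2 = x then
          (if (D₁ r).1 then 2*B*(1 + (mcoef (yCl D₁ x).length (yTl D₁ x).length 0 : ℝ))
           else 2*B*(1 + (mcoef (yTl D₁ x).length (yCl D₁ x).length 0 : ℝ)))
        else 0) ≤ (if (D₁ r).2.2 = x then 2*B*(1+G) else 0) := by
      by_cases hc : (D₁ r).2.2 = x
      · rw [if_pos hc, if_pos hc]
        rw [hc] at hG1
        by_cases hbb : (D₁ r).1 = true
        · rw [if_pos hbb]; rw [if_pos hbb] at hG1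
          nlinarith
        · rw [if_neg hbb]; rw [if_neg hbb] at hG1
          nlinarith
      · rw [if_neg hc, if_neg hc]
    have hb2 : (if (D₂ r).2.2 = x then
          (if (D₂ r).1 then 2*B*(1 + (mcoef (yCl D₂ x).length (yTl D₂ x).length 0 : ℝ))
           else 2*B*(1 + (mcoef (yTl D₂ x).length (yCl D₂ x).length 0 : ℝ)))
        else 0) ≤ (if (D₂ r).2.2 = x then 2*B*(1+G) else 0) := by
      by_cases hc : (D₂ r).2.2 = x
      · rw [if_pos hc, if_pos hc]
        rw [hc] at hG2
        by_cases hbb : (D₂ r).1 = true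
        · rw [if_pos hbb]; rw [if_pos hbb] at hG2
          nlinarith
        · rw [if_neg hbb]; rw [if_neg hbb] at hG2
          nlinarith
      · rw [if_neg hc, if_neg hc]
    linarith
  have heq : tauHat D₁ - tauHat D₂
      = (1/(N:ℝ)) * ∑ x : X,
          (Slist (yTl D₁ x) (yCl D₁ x) - Slist (yTl D₂ x) (yCl D₂ x)) := by
    unfold tauHat
    rw [effect_sum D₁ hN, effect_sum D₂ hN, Finset.sum_sub_distrib]
    ring
  rw [heq, abs_mul, abs_of_pos (by positivity : (0:ℝ) < 1/(N:ℝ))]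
  have hsum : |∑ x : X, (Slist (yTl D₁ x) (yCl D₁ x) - Slist (yTl D₂ x) (yCl D₂ x))|
      ≤ 4*B*(1+G) := by
    calc |∑ x : X, (Slist (yTl D₁ x) (yCl D₁ x) - Slist (yTl D₂ x) (yCl D₂ x))|
        ≤ ∑ x : X, |Slist (yTl D₁ x) (yCl D₁ x) - Slist (yTl D₂ x) (yCl D₂ x)| :=
          Finset.abs_sum_le_sum_abs _ _
      _ ≤ ∑ x : X, ((if (D₁ r).2.2 = x then 2*B*(1+G) else 0)
            + (if (D₂ r).2.2 = x then 2*B*(1+G) else 0)) :=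
          Finset.sum_le_sum fun x _ => hptw x
      _ = (∑ x : X, (if (D₁ r).2.2 = x then 2*B*(1+G) else 0))
            + ∑ x : X, (if (D₂ r).2.2 = x then 2*B*(1+G) else 0) :=
          Finset.sum_add_distrib
      _ = 2*B*(1+G) + 2*B*(1+G) := by
          rw [Finset.sum_ite_eq Finset.univ ((D₁ r).2.2) (fun _ => 2*B*(1+G)),
            Finset.sum_ite_eq Finset.univ ((D₂ r).2.2) (fun _ => 2*B*(1+G)),
            if_pos (Finset.mem_univ _), if_pos (Finset.mem_univ _)]
      _ = 4*B*(1+G) := by ring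
  calc 1/(N:ℝ) * |∑ x : X, (Slist (yTl D₁ x) (yCl D₁ x) - Slist (yTl D₂ x) (yCl D₂ x))|
      ≤ 1/(N:ℝ) * (4*B*(1+G)) :=
        mul_le_mul_of_nonneg_left hsum (by positivity)
    _ = 4*B/(N:ℝ)*(1+G) := by ring


lemma mcoef_le_cm (tm cm : ℕ) : mcoef cm tm 0 ≤ cm := by
  unfold mcoef
  rcases Nat.eq_zero_or_pos tm with h | h
  · simp [h]
  · rw [Nat.div_le_iff_le_mul_add_pred h]
    have := Nat.le_mul_of_pos_left cm h
    omega

lemma mcoef_le_Rk_aux {t c tm cm k : ℕ} (h1 : cm ≤ c + k) (h2 : t ≤ tm + k) :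
    mcoef cm tm 0 ≤ (if min t c ≤ k then max t c + k
      else (max t c + k + 1 + (min t c - k) - 1) / (min t c - k)) := by
  by_cases hmin : min t c ≤ k
  · rw [if_pos hmin]
    have h3 : mcoef cm tm 0 ≤ cm := mcoef_le_cm tm cm
    have h4 : c ≤ max t c := le_max_right t c
    omega
  · rw [if_neg hmin]
    set m := min t c - k with hm
    have hm1 : 0 < m := by omega
    have htm : m ≤ tm := by
      have h5 : min t c ≤ t := min_le_left t c
      omega
    have e0 : mcoef cm tm 0 = (cm + tm - 1) / tm := by unfold mcoef; rw [Nat.sub_zero]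
    have h6 : (cm + tm - 1) / tm ≤ (cm + m - 1) / m := ceil_anti hm1 htm
    have h7 : (cm + m - 1) / m ≤ (max t c + k + 1 + m - 1) / m := by
      apply Nat.div_le_div_right
      have : c ≤ max t c := le_max_right t c
      omega
    omega

lemma bT_eq {D₁ D₂ : Dataset N X} {r : Fin N}
    (hr : ∀ i, i ≠ r → D₁ i = D₂ i) (x : X) : bT D₁ r x = bT D₂ r x := by
  unfold bT
  apply List.filter_congr
  intro i _
  by_cases hir : i = r
  · subst hir; simp
  · rw [hr i hir]

lemma bC_eq {D₁ D₂ : Dataset N X} {r : Fin N}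
    (hr : ∀ i, i ≠ r → D₁ i = D₂ i) (x : X) : bC D₁ r x = bC D₂ r x := by
  unfold bC
  apply List.filter_congr
  intro i _
  by_cases hir : i = r
  · subst hir; simp
  · rw [hr i hir]

lemma bT_len (D : Dataset N X) (r : Fin N) (x : X) :
    (bT D r x).length ≤ (Tlist D x).length
      ∧ (Tlist D x).length ≤ (bT D r x).length + 1 := by
  by_cases h : (D r).1 = true ∧ (D r).2.2 = x
  · obtain ⟨j, hj, hEq⟩ := Tlist_insert h
    rw [hEq, List.length_insertIdx_of_le_length hj _]
    omega
  · rw [Tlist_eq_bT h]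
    omega

lemma bC_len (D : Dataset N X) (r : Fin N) (x : X) :
    (bC D r x).length ≤ (Clist D x).length
      ∧ (Clist D x).length ≤ (bC D r x).length + 1 := by
  by_cases h : (D r).1 = false ∧ (D r).2.2 = x
  · obtain ⟨j, hj, hEq⟩ := Clist_insert h
    rw [hEq, List.length_insertIdx_of_le_length hj _]
    omega
  · rw [Clist_eq_bC h]
    omega

lemma mcoef_le_Rk_T (D : Dataset N X) (k : ℕ) (x : X) {tm cm : ℕ}
    (h1 : cm ≤ (Clist D x).length + k) (h2 : (Tlist D x).length ≤ tm + k) :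
    mcoef cm tm 0 ≤ Rk D k x :=
  mcoef_le_Rk_aux h1 h2

lemma mcoef_le_Rk_C (D : Dataset N X) (k : ℕ) (x : X) {tm cm : ℕ}
    (h1 : cm ≤ (Tlist D x).length + k) (h2 : (Clist D x).length ≤ tm + k) :
    mcoef cm tm 0 ≤ Rk D k x := by
  have h := mcoef_le_Rk_aux (t := (Clist D x).length) (c := (Tlist D x).length) h1 h2
  simp only [min_comm ((Clist D x).length) ((Tlist D x).length),
    max_comm ((Clist D x).length) ((Tlist D x).length)] at h
  exact h

lemma exists_single_diff {D₁ D₂ : Dataset N X} (h : hammingDist D₁ D₂ = 1) :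
    ∃ r : Fin N, ∀ i, i ≠ r → D₁ i = D₂ i := by
  unfold hammingDist at h
  obtain ⟨r, hr⟩ := Finset.card_eq_one.mp h
  refine ⟨r, fun i hir => ?_⟩
  by_contra hne
  have hmem : i ∈ ({j | D₁ j ≠ D₂ j} : Finset (Fin N)) := by
    simp only [Finset.mem_filter, Finset.mem_univ, true_and, Set.mem_setOf_eq]
    exact hne
  rw [hr, Finset.mem_singleton] at hmem
  exact hir hmem

lemma Tlen_le_ham (D D' : Dataset N X) (x : X) :
    (Tlist D' x).length ≤ (Tlist D x).length + hammingDist D D' := by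
  have hL : ∀ E : Dataset N X, (Tlist E x).length = ((Tlist E x).toFinset).card :=
    fun E => (List.toFinset_card_of_nodup (Tlist_nodup E x)).symm
  rw [hL, hL]
  have hsub : (Tlist D' x).toFinset
      ⊆ (Tlist D x).toFinset ∪ ({i | D i ≠ D' i} : Finset (Fin N)) := by
    intro i hi
    rw [List.mem_toFinset, Tlist_mem_iff] at hi
    by_cases he : D i = D' i
    · apply Finset.mem_union_left
      rw [List.mem_toFinset, Tlist_mem_iff, he]
      exact hi
    · apply Finset.mem_union_right
      simp only [Finset.mem_filter, Finset.mem_univ, true_and, Set.mem_setOf_eq]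
      exact he
  calc ((Tlist D' x).toFinset).card
      ≤ ((Tlist D x).toFinset ∪ ({i | D i ≠ D' i} : Finset (Fin N))).card :=
        Finset.card_le_card hsub
    _ ≤ ((Tlist D x).toFinset).card + ({i | D i ≠ D' i} : Finset (Fin N)).card :=
        Finset.card_union_le _ _
    _ = ((Tlist D x).toFinset).card + hammingDist D D' := rfl

lemma Clen_le_ham (D D' : Dataset N X) (x : X) :
    (Clist D' x).length ≤ (Clist D x).length + hammingDist D D' := by
  have hL : ∀ E : Dataset N X, (Clist E x).length = ((Clist E x).toFinset).card :=
    fun E => (List.toFinset_card_of_nodup (Clist_nodup E x)).symm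
  rw [hL, hL]
  have hsub : (Clist D' x).toFinset
      ⊆ (Clist D x).toFinset ∪ ({i | D i ≠ D' i} : Finset (Fin N)) := by
    intro i hi
    rw [List.mem_toFinset, Clist_mem_iff] at hi
    by_cases he : D i = D' i
    · apply Finset.mem_union_left
      rw [List.mem_toFinset, Clist_mem_iff, he]
      exact hi
    · apply Finset.mem_union_right
      simp only [Finset.mem_filter, Finset.mem_univ, true_and, Set.mem_setOf_eq]
      exact he
  calc ((Clist D' x).toFinset).card
      ≤ ((Clist D x).toFinset ∪ ({i | D i ≠ D' i} : Finset (Fin N))).card :=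
        Finset.card_le_card hsub
    _ ≤ ((Clist D x).toFinset).card + ({i | D i ≠ D' i} : Finset (Fin N)).card :=
        Finset.card_union_le _ _
    _ = ((Clist D x).toFinset).card + hammingDist D D' := rfl

end ATE

open ATE in

theorem matching_smooth_sensitivity_upper_bound
    {N : ℕ} (hN : 0 < N) {X : Type} [Fintype X] [DecidableEq X]
    {B β : ℝ} (hB : 0 < B) (hβ : 0 < β) (D : Dataset N X) (hD : Valid B D) :
    Sstar B β tauHat D ≤
      ⨆ k : Fin (N + 1),
        Real.exp (-(k : ℝ) * β) * (4 * B / (N : ℝ)) *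
          (1 + ((Finset.univ.sup (fun x : X => Rk D k x) : ℕ) : ℝ)) := by
  classical
  have hNR : (0:ℝ) < (N:ℝ) := by exact_mod_cast hN
  set F : Fin (N + 1) → ℝ := fun k =>
    Real.exp (-(k : ℝ) * β) * (4 * B / (N : ℝ)) *
      (1 + ((Finset.univ.sup (fun x : X => Rk D k x) : ℕ) : ℝ)) with hF
  have hbdd : BddAbove (Set.range F) := Set.Finite.bddAbove (Set.finite_range F)
  have hF0 : (0:ℝ) ≤ F 0 := by
    rw [hF]
    have h1 : (0:ℝ) < Real.exp (-((0 : Fin (N+1)) : ℝ) * β) := Real.exp_pos _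
    have h2 : (0:ℝ) ≤ 4 * B / (N:ℝ) := by positivity
    have h3 : (0:ℝ) ≤ 1 + ((Finset.univ.sup (fun x : X => Rk D (0 : Fin (N+1)) x) : ℕ) : ℝ) := by
      positivity
    positivity
  have hRHS0 : (0:ℝ) ≤ ⨆ k, F k := le_trans hF0 (le_ciSup hbdd 0)
  apply Real.iSup_le _ hRHS0
  rintro ⟨D', hD'⟩
  set k := hammingDist D D' with hk
  have hkN : k ≤ N := by
    have h := hammingDist_le_card_fintype (x := D) (y := D')
    simpa using h
  set kf : Fin (N+1) := ⟨k, by omega⟩ with hkf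
  set Gn : ℕ := Finset.univ.sup (fun x : X => Rk D k x) with hGn
  have hLSnn : (0:ℝ) ≤ 4*B/(N:ℝ)*(1+(Gn:ℝ)) := by positivity
  have hLS : LS B tauHat D' ≤ 4*B/(N:ℝ)*(1+(Gn:ℝ)) := by
    apply Real.iSup_le _ hLSnn
    rintro ⟨D'', hval'', hdist''⟩
    obtain ⟨r, hr⟩ := exists_single_diff hdist''
    have hhamT' : ∀ x, (Tlist D' x).length ≤ (Tlist D x).length + k := fun x =>
      Tlen_le_ham D D' x
    have hhamC' : ∀ x, (Clist D' x).length ≤ (Clist D x).length + k := fun x =>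
      Clen_le_ham D D' x
    have hhamT : ∀ x, (Tlist D x).length ≤ (Tlist D' x).length + k := by
      intro x
      have h := Tlen_le_ham D' D x
      rwa [hammingDist_comm, ← hk] at h
    have hhamC : ∀ x, (Clist D x).length ≤ (Clist D' x).length + k := by
      intro x
      have h := Clen_le_ham D' D x
      rwa [hammingDist_comm, ← hk] at h
    apply tau_diff hN (le_of_lt hB) hD' hval'' r hr ((Gn:ℝ)) (Nat.cast_nonneg _)
    · -- hG1 : over D' at x₁
      set x₁ := (D' r).2.2 with hx₁
      have hR : Rk D k x₁ ≤ Gn := Finset.le_sup (Finset.mem_univ x₁)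
      have hlT : (yTl D' x₁).length = (Tlist D' x₁).length := List.length_map _
      have hlC : (yCl D' x₁).length = (Clist D' x₁).length := List.length_map _
      by_cases hb : (D' r).1 = true
      · rw [if_pos hb, hlT, hlC]
        have harith : mcoef (Clist D' x₁).length (Tlist D' x₁).length 0 ≤ Rk D k x₁ :=
          mcoef_le_Rk_T D k x₁ (hhamC' x₁) (hhamT x₁)
        exact_mod_cast le_trans harith hR
      · rw [if_neg hb, hlT, hlC]
        have harith : mcoef (Tlist D' x₁).length (Clist D' x₁).length 0 ≤ Rk D k x₁ :=
          mcoef_le_Rk_C D k x₁ (hhamT' x₁) (hhamC x₁)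
        exact_mod_cast le_trans harith hR
    · -- hG2 : over D'' at x₂
      set x₂ := (D'' r).2.2 with hx₂
      have hR : Rk D k x₂ ≤ Gn := Finset.le_sup (Finset.mem_univ x₂)
      have hlT : (yTl D'' x₂).length = (Tlist D'' x₂).length := List.length_map _
      have hlC : (yCl D'' x₂).length = (Clist D'' x₂).length := List.length_map _
      by_cases hb : (D'' r).1 = true
      · rw [if_pos hb, hlT, hlC]
        have hC2 : (Clist D'' x₂).length ≤ (Clist D' x₂).length := by
          have h1 : Clist D'' x₂ = bC D'' r x₂ := Clist_eq_bC (by rw [hb]; simp)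
          rw [h1, ← bC_eq hr x₂]
          exact (bC_len D' r x₂).1
        have hT2 : (Tlist D' x₂).length ≤ (Tlist D'' x₂).length := by
          obtain ⟨j, hj, hEq⟩ := Tlist_insert (D := D'') (r := r) (x := x₂) ⟨hb, rfl⟩
          have h2 := (bT_len D' r x₂).2
          rw [hEq, List.length_insertIdx_of_le_length hj _, ← bT_eq hr x₂]
          omega
        have harith : mcoef (Clist D'' x₂).length (Tlist D'' x₂).length 0 ≤ Rk D k x₂ :=
          mcoef_le_Rk_T D k x₂ (le_trans hC2 (hhamC' x₂))
            (le_trans (hhamT x₂) (by omega))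
        exact_mod_cast le_trans harith hR
      · rw [if_neg hb, hlT, hlC]
        have hbf : (D'' r).1 = false := by
          cases hq : (D'' r).1
          · rfl
          · exact absurd hq hb
        have hT2 : (Tlist D'' x₂).length ≤ (Tlist D' x₂).length := by
          have h1 : Tlist D'' x₂ = bT D'' r x₂ := Tlist_eq_bT (by rw [hbf]; simp)
          rw [h1, ← bT_eq hr x₂]
          exact (bT_len D' r x₂).1
        have hC2 : (Clist D' x₂).length ≤ (Clist D'' x₂).length := by
          obtain ⟨j, hj, hEq⟩ := Clist_insert (D := D'') (r := r) (x := x₂) ⟨hbf, rfl⟩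
          have h2 := (bC_len D' r x₂).2
          rw [hEq, List.length_insertIdx_of_le_length hj _, ← bC_eq hr x₂]
          omega
        have harith : mcoef (Tlist D'' x₂).length (Clist D'' x₂).length 0 ≤ Rk D k x₂ :=
          mcoef_le_Rk_C D k x₂ (le_trans hT2 (hhamT' x₂))
            (le_trans (hhamC x₂) (by omega))
        exact_mod_cast le_trans harith hR
  have hkfval : ((kf : Fin (N+1)) : ℕ) = k := rfl
  have hstep : LS B tauHat D' * Real.exp (-β * (k : ℝ))
      ≤ (4*B/(N:ℝ)*(1+(Gn:ℝ))) * Real.exp (-β * (k : ℝ)) :=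
    mul_le_mul_of_nonneg_right hLS (Real.exp_nonneg _)
  have hFeq : (4*B/(N:ℝ)*(1+(Gn:ℝ))) * Real.exp (-β * (k : ℝ)) = F kf := by
    rw [hF]
    simp only [hkfval]
    rw [hGn]
    ring_nf
  calc LS B tauHat D' * Real.exp (-β * (k : ℝ))
      ≤ (4*B/(N:ℝ)*(1+(Gn:ℝ))) * Real.exp (-β * (k : ℝ)) := hstep
    _ = F kf := hFeq
    _ ≤ ⨆ j, F j := le_ciSup hbdd kf
end

section
/- Let τ̂ be the exact single matching estimator on size-N datasets with outcomes in [0, B]. If a dataset D is well-balanced in every occupied covariate stratum, i.e., for every x ∈ 𝒳 with |T_x| + |C_x| > 0 one has |T_x| = |C_x| ≥ 1, then the local sensitivity of τ̂ at D satisfies LS_τ̂(D) ≤ 12B/N. -/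
namespace ATE

variable {N : ℕ} {X : Type} [DecidableEq X]

lemma mem_Tlist {E : Dataset N X} {x : X} {i : Fin N} :
    i ∈ Tlist E x ↔ (E i).1 = true ∧ (E i).2.2 = x := by
  simp [Tlist, List.mem_filter]

lemma mem_Clist {E : Dataset N X} {x : X} {i : Fin N} :
    i ∈ Clist E x ↔ (E i).1 = false ∧ (E i).2.2 = x := by
  simp [Clist, List.mem_filter]

lemma nodup_Tlist (E : Dataset N X) (x : X) : (Tlist E x).Nodup :=
  (List.nodup_finRange N).filter _

lemma nodup_Clist (E : Dataset N X) (x : X) : (Clist E x).Nodup :=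
  (List.nodup_finRange N).filter _

lemma effect_T {E : Dataset N X} {x : X} {i : Fin N} (hi : i ∈ Tlist E x)
    (hc : 0 < (Clist E x).length) :
    effect E i = Y E i - Y E ((Clist E x)[(Tlist E x).idxOf i % (Clist E x).length]'
      (Nat.mod_lt _ hc)) := by
  obtain ⟨h1, h2⟩ := mem_Tlist.mp hi
  rw [effect]
  simp only [h2, h1, if_true]
  rw [if_neg (by simp [List.isEmpty_iff, ← List.length_pos_iff]; omega),
    List.getD_eq_getElem _ _ (Nat.mod_lt _ hc)]

lemma effect_C {E : Dataset N X} {x : X} {i : Fin N} (hi : i ∈ Clist E x)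
    (ht : 0 < (Tlist E x).length) :
    effect E i = Y E ((Tlist E x)[(Clist E x).idxOf i % (Tlist E x).length]'
      (Nat.mod_lt _ ht)) - Y E i := by
  obtain ⟨h1, h2⟩ := mem_Clist.mp hi
  rw [effect]
  simp only [h2, h1, if_false, Bool.false_eq_true]
  rw [if_neg (by simp [List.isEmpty_iff, ← List.length_pos_iff]; omega),
    List.getD_eq_getElem _ _ (Nat.mod_lt _ ht)]

lemma effect_T0 {E : Dataset N X} {x : X} {i : Fin N} (hi : i ∈ Tlist E x)
    (hc : Clist E x = []) : effect E i = 0 := by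
  obtain ⟨h1, h2⟩ := mem_Tlist.mp hi
  rw [effect]
  simp [h2, h1, hc]

lemma effect_C0 {E : Dataset N X} {x : X} {i : Fin N} (hi : i ∈ Clist E x)
    (ht : Tlist E x = []) : effect E i = 0 := by
  obtain ⟨h1, h2⟩ := mem_Clist.mp hi
  rw [effect]
  simp [h2, h1, ht]

lemma sum_map_fin {α : Type*} (L : List α) (f : α → ℝ) :
    (L.map f).sum = ∑ j : Fin L.length, f (L.get j) := by
  conv_lhs => rw [← List.ofFn_get L]
  rw [List.map_ofFn, List.sum_ofFn]
  rfl

noncomputable def msum (L : List ℝ) (n : ℕ) : ℝ :=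
  ∑ j ∈ Finset.range n, L.getD (j % L.length) 0

lemma sum_eq_range (L : List ℝ) : L.sum = ∑ j ∈ Finset.range L.length, L.getD j 0 := by
  conv_lhs => rw [← List.ofFn_get L, List.sum_ofFn]
  rw [← Fin.sum_univ_eq_sum_range (fun j => L.getD j 0) L.length]
  refine Finset.sum_congr rfl fun j _ => ?_
  rw [List.getD_eq_getElem _ _ j.isLt, List.get_eq_getElem]

lemma msum_self (L : List ℝ) : msum L L.length = L.sum := by
  rw [msum, sum_eq_range]
  exact Finset.sum_congr rfl fun j hj => by
    rw [Nat.mod_eq_of_lt (Finset.mem_range.mp hj)]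

lemma getD_mem_bound {L : List ℝ} {B : ℝ} (h : ∀ y ∈ L, 0 ≤ y ∧ y ≤ B) {j : ℕ}
    (hj : j < L.length) : 0 ≤ L.getD j 0 ∧ L.getD j 0 ≤ B := by
  rw [List.getD_eq_getElem _ _ hj]
  exact h _ (L.getElem_mem hj)

lemma abs_msum_sub_sum {L : List ℝ} {B : ℝ} (hB : 0 ≤ B)
    (h : ∀ y ∈ L, 0 ≤ y ∧ y ≤ B) (hL : 0 < L.length) {n : ℕ}
    (h1 : n ≤ L.length + 2) (h2 : L.length ≤ n + 2) :
    |msum L n - L.sum| ≤ 2 * B := by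
  set c := L.length with hc
  rcases le_total n c with hle | hle
  · -- msum L n = ∑_{j<n} L.getD j 0 ; L.sum = that + ∑_{Ico n c}
    have hmsum : msum L n = ∑ j ∈ Finset.range n, L.getD j 0 :=
      Finset.sum_congr rfl fun j hj => by
        rw [Nat.mod_eq_of_lt (lt_of_lt_of_le (Finset.mem_range.mp hj) hle)]
    have hsplit : ∑ j ∈ Finset.range n, L.getD j 0 + ∑ j ∈ Finset.Ico n c, L.getD j 0
        = L.sum := by
      rw [sum_eq_range]
      simp only [Finset.range_eq_Ico]
      exact Finset.sum_Ico_consecutive _ (Nat.zero_le n) hle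
    have : msum L n - L.sum = -(∑ j ∈ Finset.Ico n c, L.getD j 0) := by
      rw [hmsum, ← hsplit]; ring
    rw [this, abs_neg]
    have hnn : 0 ≤ ∑ j ∈ Finset.Ico n c, L.getD j 0 :=
      Finset.sum_nonneg fun j hj =>
        (getD_mem_bound h (Finset.mem_Ico.mp hj).2).1
    rw [abs_of_nonneg hnn]
    calc ∑ j ∈ Finset.Ico n c, L.getD j 0 ≤ (Finset.Ico n c).card • B :=
          Finset.sum_le_card_nsmul _ _ _ fun j hj =>
            (getD_mem_bound h (Finset.mem_Ico.mp hj).2).2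
      _ = ((c - n : ℕ) : ℝ) * B := by rw [Nat.card_Ico, nsmul_eq_mul]
      _ ≤ 2 * B := by
          apply mul_le_mul_of_nonneg_right _ hB
          exact_mod_cast by omega
  · have hsplit : msum L n = ∑ j ∈ Finset.range c, L.getD (j % c) 0
        + ∑ j ∈ Finset.Ico c n, L.getD (j % c) 0 := by
      rw [msum]
      simp only [Finset.range_eq_Ico]
      exact (Finset.sum_Ico_consecutive _ (Nat.zero_le c) hle).symm
    have hfirst : ∑ j ∈ Finset.range c, L.getD (j % c) 0 = L.sum := msum_self L
    have : msum L n - L.sum = ∑ j ∈ Finset.Ico c n, L.getD (j % c) 0 := by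
      rw [hsplit, hfirst]; ring
    rw [this]
    have hnn : 0 ≤ ∑ j ∈ Finset.Ico c n, L.getD (j % c) 0 :=
      Finset.sum_nonneg fun j _ => (getD_mem_bound h (Nat.mod_lt _ hL)).1
    rw [abs_of_nonneg hnn]
    calc ∑ j ∈ Finset.Ico c n, L.getD (j % c) 0 ≤ (Finset.Ico c n).card • B :=
          Finset.sum_le_card_nsmul _ _ _ fun j _ =>
            (getD_mem_bound h (Nat.mod_lt _ hL)).2
      _ = ((n - c : ℕ) : ℝ) * B := by rw [Nat.card_Ico, nsmul_eq_mul]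
      _ ≤ 2 * B := by
          apply mul_le_mul_of_nonneg_right _ hB
          exact_mod_cast by omega


noncomputable def TY (E : Dataset N X) (x : X) : List ℝ := (Tlist E x).map (Y E)
noncomputable def CY (E : Dataset N X) (x : X) : List ℝ := (Clist E x).map (Y E)

noncomputable def SS (E : Dataset N X) (x : X) : ℝ :=
  ((Tlist E x).map (effect E)).sum + ((Clist E x).map (effect E)).sum

@[simp] lemma TY_length (E : Dataset N X) (x : X) : (TY E x).length = (Tlist E x).length :=
  List.length_map _

@[simp] lemma CY_length (E : Dataset N X) (x : X) : (CY E x).length = (Clist E x).length :=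
  List.length_map _

lemma TY_getD {E : Dataset N X} {x : X} {j : ℕ} (hj : j < (Tlist E x).length) :
    (TY E x).getD j 0 = Y E ((Tlist E x)[j]'hj) := by
  rw [TY, List.getD_eq_getElem _ _ (by simpa using hj), List.getElem_map]

lemma CY_getD {E : Dataset N X} {x : X} {j : ℕ} (hj : j < (Clist E x).length) :
    (CY E x).getD j 0 = Y E ((Clist E x)[j]'hj) := by
  rw [CY, List.getD_eq_getElem _ _ (by simpa using hj), List.getElem_map]

lemma SS_eq {E : Dataset N X} {x : X} (ht : 0 < (Tlist E x).length)
    (hc : 0 < (Clist E x).length) :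
    SS E x = ((TY E x).sum - msum (CY E x) (Tlist E x).length)
      + (msum (TY E x) (Clist E x).length - (CY E x).sum) := by
  have hTpart : ((Tlist E x).map (effect E)).sum
      = (TY E x).sum - msum (CY E x) (Tlist E x).length := by
    rw [sum_map_fin]
    have : ∀ j : Fin (Tlist E x).length,
        effect E ((Tlist E x).get j)
          = (TY E x).getD (j : ℕ) 0 - (CY E x).getD ((j : ℕ) % (Clist E x).length) 0 := by
      intro j
      rw [effect_T (List.get_mem _ _) hc,
        List.get_idxOf (nodup_Tlist E x) j,
        TY_getD j.isLt, CY_getD (Nat.mod_lt _ hc)]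
      rfl
    rw [Finset.sum_congr rfl fun j _ => this j, Finset.sum_sub_distrib]
    congr 1
    · rw [sum_eq_range, TY_length, ← Fin.sum_univ_eq_sum_range (fun j => (TY E x).getD j 0)]
    · rw [msum, CY_length, ← Fin.sum_univ_eq_sum_range
        (fun j => (CY E x).getD (j % (Clist E x).length) 0)]
  have hCpart : ((Clist E x).map (effect E)).sum
      = msum (TY E x) (Clist E x).length - (CY E x).sum := by
    rw [sum_map_fin]
    have : ∀ j : Fin (Clist E x).length,
        effect E ((Clist E x).get j)
          = (TY E x).getD ((j : ℕ) % (Tlist E x).length) 0 - (CY E x).getD (j : ℕ) 0 := by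
      intro j
      rw [effect_C (List.get_mem _ _) ht,
        List.get_idxOf (nodup_Clist E x) j,
        TY_getD (Nat.mod_lt _ ht), CY_getD j.isLt]
      rfl
    rw [Finset.sum_congr rfl fun j _ => this j, Finset.sum_sub_distrib]
    congr 1
    · rw [msum, TY_length, ← Fin.sum_univ_eq_sum_range
        (fun j => (TY E x).getD (j % (Tlist E x).length) 0)]
    · rw [sum_eq_range, CY_length, ← Fin.sum_univ_eq_sum_range (fun j => (CY E x).getD j 0)]
  rw [SS, hTpart, hCpart]

lemma SS_zero_T {E : Dataset N X} {x : X} (ht : Tlist E x = []) : SS E x = 0 := by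
  rw [SS, ht]
  simp only [List.map_nil, List.sum_nil, zero_add]
  exact List.sum_eq_zero fun r hr => by
    obtain ⟨i, hi, rfl⟩ := List.mem_map.mp hr
    exact effect_C0 hi ht

lemma SS_zero_C {E : Dataset N X} {x : X} (hc : Clist E x = []) : SS E x = 0 := by
  rw [SS, hc]
  simp only [List.map_nil, List.sum_nil, add_zero]
  exact List.sum_eq_zero fun r hr => by
    obtain ⟨i, hi, rfl⟩ := List.mem_map.mp hr
    exact effect_T0 hi hc


lemma TY_bound {B : ℝ} {E : Dataset N X} (hE : Valid B E) (x : X) :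
    ∀ y ∈ TY E x, 0 ≤ y ∧ y ≤ B := by
  intro y hy
  obtain ⟨i, _, rfl⟩ := List.mem_map.mp hy
  exact ⟨(hE i).1, (hE i).2⟩

lemma CY_bound {B : ℝ} {E : Dataset N X} (hE : Valid B E) (x : X) :
    ∀ y ∈ CY E x, 0 ≤ y ∧ y ≤ B := by
  intro y hy
  obtain ⟨i, _, rfl⟩ := List.mem_map.mp hy
  exact ⟨(hE i).1, (hE i).2⟩

lemma list_sum_bound {B : ℝ} {L : List ℝ} (h : ∀ y ∈ L, 0 ≤ y ∧ y ≤ B) :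
    0 ≤ L.sum ∧ L.sum ≤ L.length * B := by
  constructor
  · exact List.sum_nonneg fun y hy => (h y hy).1
  · calc L.sum ≤ L.length • B := List.sum_le_card_nsmul L B fun y hy => (h y hy).2
      _ = L.length * B := nsmul_eq_mul _ _

lemma err_bound {B : ℝ} {E : Dataset N X} (hB : 0 ≤ B) (hE : Valid B E) (x : X)
    (h1 : (Tlist E x).length ≤ (Clist E x).length + 2)
    (h2 : (Clist E x).length ≤ (Tlist E x).length + 2)
    (h3 : (Tlist E x).length = 0 → (Clist E x).length ≤ 2)
    (h4 : (Clist E x).length = 0 → (Tlist E x).length ≤ 2) :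
    |SS E x - 2 * ((TY E x).sum - (CY E x).sum)| ≤ 4 * B := by
  rcases Nat.eq_zero_or_pos (Tlist E x).length with ht | ht
  · have hTnil : Tlist E x = [] := List.length_eq_zero_iff.mp ht
    have hTY : (TY E x).sum = 0 := by rw [TY, hTnil]; simp
    rw [SS_zero_T hTnil, hTY]
    have hCb := list_sum_bound (CY_bound hE x)
    have hlen : ((CY E x).length : ℝ) ≤ 2 := by
      have := h3 ht
      rw [CY_length]
      exact_mod_cast this
    rw [abs_of_nonneg (by nlinarith [hCb.1])]
    nlinarith [hCb.1, hCb.2, mul_le_mul_of_nonneg_right hlen hB]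
  rcases Nat.eq_zero_or_pos (Clist E x).length with hc | hc
  · have hCnil : Clist E x = [] := List.length_eq_zero_iff.mp hc
    have hCY : (CY E x).sum = 0 := by rw [CY, hCnil]; simp
    rw [SS_zero_C hCnil, hCY]
    have hTb := list_sum_bound (TY_bound hE x)
    have hlen : ((TY E x).length : ℝ) ≤ 2 := by
      have := h4 hc
      rw [TY_length]
      exact_mod_cast this
    rw [abs_of_nonpos (by nlinarith [hTb.1])]
    nlinarith [hTb.1, hTb.2, mul_le_mul_of_nonneg_right hlen hB]
  · rw [SS_eq ht hc]
    have e1 : |msum (TY E x) (Clist E x).length - (TY E x).sum| ≤ 2 * B := by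
      apply abs_msum_sub_sum hB (TY_bound hE x) (by simpa using ht)
      · rw [TY_length]; omega
      · rw [TY_length]; omega
    have e2 : |msum (CY E x) (Tlist E x).length - (CY E x).sum| ≤ 2 * B := by
      apply abs_msum_sub_sum hB (CY_bound hE x) (by simpa using hc)
      · rw [CY_length]; omega
      · rw [CY_length]; omega
    calc |_| = |(msum (TY E x) (Clist E x).length - (TY E x).sum)
          + ((CY E x).sum - msum (CY E x) (Tlist E x).length)| := by ring_nf
      _ ≤ _ + _ := abs_add_le _ _
      _ ≤ 2 * B + 2 * B := add_le_add e1 (by rw [abs_sub_comm]; exact e2)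
      _ = 4 * B := by ring

lemma SS_balanced {E : Dataset N X} {x : X}
    (hb : 0 < (Tlist E x).length + (Clist E x).length →
      (Tlist E x).length = (Clist E x).length ∧ 1 ≤ (Tlist E x).length) :
    SS E x = 2 * ((TY E x).sum - (CY E x).sum) := by
  rcases Nat.eq_zero_or_pos ((Tlist E x).length + (Clist E x).length) with h0 | h0
  · have ht : Tlist E x = [] := List.length_eq_zero_iff.mp (by omega)
    have hc : Clist E x = [] := List.length_eq_zero_iff.mp (by omega)
    rw [SS_zero_T ht, TY, CY, ht, hc]
    simp
  · obtain ⟨heq, h1⟩ := hb h0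
    have ht : 0 < (Tlist E x).length := h1
    have hc : 0 < (Clist E x).length := heq ▸ ht
    rw [SS_eq ht hc]
    have m1 : msum (CY E x) (Tlist E x).length = (CY E x).sum := by
      rw [show (Tlist E x).length = (CY E x).length by rw [CY_length, heq]]
      exact msum_self _
    have m2 : msum (TY E x) (Clist E x).length = (TY E x).sum := by
      rw [show (Clist E x).length = (TY E x).length by rw [TY_length, heq]]
      exact msum_self _
    rw [m1, m2]
    ring

lemma partition [Fintype X] (E : Dataset N X) (f : Fin N → ℝ) :
    ∑ i, f i = ∑ x : X, (((Tlist E x).map f).sum + ((Clist E x).map f).sum) := by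
  rw [← Finset.sum_fiberwise Finset.univ (fun i => (E i).2.2) f]
  refine Finset.sum_congr rfl fun x _ => ?_
  rw [← Finset.sum_filter_add_sum_filter_not
    (Finset.filter (fun i => (E i).2.2 = x) Finset.univ) (fun i => (E i).1 = true) f]
  congr 1
  · rw [← List.sum_toFinset f (nodup_Tlist E x)]
    apply Finset.sum_congr _ fun _ _ => rfl
    ext i
    simp only [Finset.mem_filter, Finset.mem_univ, true_and, List.mem_toFinset, mem_Tlist]
    tauto
  · rw [← List.sum_toFinset f (nodup_Clist E x)]
    apply Finset.sum_congr _ fun _ _ => rfl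
    ext i
    simp only [Finset.mem_filter, Finset.mem_univ, true_and, List.mem_toFinset, mem_Clist,
      Bool.not_eq_true]
    tauto

lemma sum_sgn [Fintype X] (E : Dataset N X) :
    ∑ x : X, ((TY E x).sum - (CY E x).sum)
      = ∑ i, (if (E i).1 then Y E i else -(Y E i)) := by
  rw [partition E (fun i => if (E i).1 then Y E i else -(Y E i))]
  refine Finset.sum_congr rfl fun x _ => ?_
  have hT : (Tlist E x).map (fun i => if (E i).1 then Y E i else -(Y E i))
      = (Tlist E x).map (Y E) :=
    List.map_congr_left fun i hi => by rw [if_pos (mem_Tlist.mp hi).1]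
  have hC : (Clist E x).map (fun i => if (E i).1 then Y E i else -(Y E i))
      = (Clist E x).map (fun i => -(Y E i)) :=
    List.map_congr_left fun i hi => by
      rw [if_neg (by simp [(mem_Clist.mp hi).1])]
  have hneg : ((Clist E x).map (fun i => -(Y E i))).sum = -((Clist E x).map (Y E)).sum := by
    induction Clist E x with
    | nil => simp
    | cons a l ih => simp only [List.map_cons, List.sum_cons, ih]; ring
  rw [hT, hC, hneg, TY, CY]
  ring

lemma countP_le_countP_add_count {α : Type*} [DecidableEq α] {p q : α → Bool} {k : α}
    (h : ∀ i, i ≠ k → p i = q i) (l : List α) :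
    l.countP p ≤ l.countP q + l.count k := by
  induction l with
  | nil => simp
  | cons a l ih =>
    rw [List.countP_cons, List.countP_cons, List.count_cons]
    rcases eq_or_ne a k with rfl | hak
    · simp only [beq_self_eq_true, if_true]
      have h1 : (if p a = true then 1 else 0) ≤ 1 := by split <;> omega
      omega
    · rw [h a hak]
      simp only [beq_iff_eq, hak, if_false]
      omega

lemma length_Tlist_le {E E' : Dataset N X} {k : Fin N}
    (h : ∀ i, i ≠ k → E i = E' i) (x : X) :
    (Tlist E x).length ≤ (Tlist E' x).length + 1 := by
  rw [Tlist, Tlist, ← List.countP_eq_length_filter, ← List.countP_eq_length_filter]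
  have := countP_le_countP_add_count
    (p := fun i => decide ((E i).1 = true ∧ (E i).2.2 = x))
    (q := fun i => decide ((E' i).1 = true ∧ (E' i).2.2 = x))
    (k := k) (fun i hi => by simp only [h i hi]) (List.finRange N)
  have hcount : (List.finRange N).count k = 1 :=
    List.count_eq_one_of_mem (List.nodup_finRange N) (List.mem_finRange k)
  omega

lemma length_Clist_le {E E' : Dataset N X} {k : Fin N}
    (h : ∀ i, i ≠ k → E i = E' i) (x : X) :
    (Clist E x).length ≤ (Clist E' x).length + 1 := by
  rw [Clist, Clist, ← List.countP_eq_length_filter, ← List.countP_eq_length_filter]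
  have := countP_le_countP_add_count
    (p := fun i => decide ((E i).1 = false ∧ (E i).2.2 = x))
    (q := fun i => decide ((E' i).1 = false ∧ (E' i).2.2 = x))
    (k := k) (fun i hi => by simp only [h i hi]) (List.finRange N)
  have hcount : (List.finRange N).count k = 1 :=
    List.count_eq_one_of_mem (List.nodup_finRange N) (List.mem_finRange k)
  omega

lemma Tlist_congr {E E' : Dataset N X} {k : Fin N} (h : ∀ i, i ≠ k → E i = E' i)
    {x : X} (ha : (E k).2.2 ≠ x) (hb : (E' k).2.2 ≠ x) : Tlist E x = Tlist E' x := by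
  apply List.filter_congr
  intro i _
  rcases eq_or_ne i k with rfl | hik
  · simp [ha, hb]
  · simp only [h i hik]

lemma Clist_congr {E E' : Dataset N X} {k : Fin N} (h : ∀ i, i ≠ k → E i = E' i)
    {x : X} (ha : (E k).2.2 ≠ x) (hb : (E' k).2.2 ≠ x) : Clist E x = Clist E' x := by
  apply List.filter_congr
  intro i _
  rcases eq_or_ne i k with rfl | hik
  · simp [ha, hb]
  · simp only [h i hik]

lemma mem_T_ne {E : Dataset N X} {x : X} {k : Fin N} (ha : (E k).2.2 ≠ x)
    {i : Fin N} (hi : i ∈ Tlist E x) : i ≠ k :=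
  fun he => ha (he ▸ (mem_Tlist.mp hi).2)

lemma mem_C_ne {E : Dataset N X} {x : X} {k : Fin N} (ha : (E k).2.2 ≠ x)
    {i : Fin N} (hi : i ∈ Clist E x) : i ≠ k :=
  fun he => ha (he ▸ (mem_Clist.mp hi).2)

lemma TY_congr {E E' : Dataset N X} {k : Fin N} (h : ∀ i, i ≠ k → E i = E' i)
    {x : X} (ha : (E k).2.2 ≠ x) (hb : (E' k).2.2 ≠ x) : TY E x = TY E' x := by
  rw [TY, TY, ← Tlist_congr h ha hb]
  exact List.map_congr_left fun i hi => by rw [Y, Y, h i (mem_T_ne ha hi)]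

lemma CY_congr {E E' : Dataset N X} {k : Fin N} (h : ∀ i, i ≠ k → E i = E' i)
    {x : X} (ha : (E k).2.2 ≠ x) (hb : (E' k).2.2 ≠ x) : CY E x = CY E' x := by
  rw [CY, CY, ← Clist_congr h ha hb]
  exact List.map_congr_left fun i hi => by rw [Y, Y, h i (mem_C_ne ha hi)]

lemma effect_congr {E E' : Dataset N X} {k : Fin N} (h : ∀ i, i ≠ k → E i = E' i)
    {x : X} (ha : (E k).2.2 ≠ x) (hb : (E' k).2.2 ≠ x)
    {i : Fin N} (hix : i ∈ Tlist E x ∨ i ∈ Clist E x) : effect E i = effect E' i := by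
  have hT := Tlist_congr h ha hb
  have hC := Clist_congr h ha hb
  rcases hix with hi | hi
  · have hi' : i ∈ Tlist E' x := hT ▸ hi
    rcases Nat.eq_zero_or_pos (Clist E x).length with hc | hc
    · have hnil : Clist E x = [] := List.length_eq_zero_iff.mp hc
      rw [effect_T0 hi hnil, effect_T0 hi' (hC ▸ hnil)]
    · have hc' : 0 < (Clist E' x).length := hC ▸ hc
      rw [effect_T hi hc, effect_T hi' hc']; simp only [← hT, ← hC]
      have hik := mem_T_ne ha hi
      have hek : ((Clist E x)[(Tlist E x).idxOf i % (Clist E x).length]'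
          (Nat.mod_lt _ hc)) ≠ k :=
        mem_C_ne ha (List.getElem_mem _)
      rw [Y, Y, Y, Y, h i hik, h _ hek]
  · have hi' : i ∈ Clist E' x := hC ▸ hi
    rcases Nat.eq_zero_or_pos (Tlist E x).length with ht | ht
    · have hnil : Tlist E x = [] := List.length_eq_zero_iff.mp ht
      rw [effect_C0 hi hnil, effect_C0 hi' (hT ▸ hnil)]
    · have ht' : 0 < (Tlist E' x).length := hT ▸ ht
      rw [effect_C hi ht, effect_C hi' ht']; simp only [← hT, ← hC]
      have hik := mem_C_ne hb hi'
      have hek : ((Tlist E x)[(Clist E x).idxOf i % (Tlist E x).length]'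
          (Nat.mod_lt _ ht)) ≠ k :=
        mem_T_ne ha (List.getElem_mem _)
      rw [Y, Y, Y, Y, h i hik, h _ hek]

lemma SS_congr {E E' : Dataset N X} {k : Fin N} (h : ∀ i, i ≠ k → E i = E' i)
    {x : X} (ha : (E k).2.2 ≠ x) (hb : (E' k).2.2 ≠ x) : SS E x = SS E' x := by
  rw [SS, SS, ← Tlist_congr h ha hb, ← Clist_congr h ha hb]
  congr 1
  · exact congrArg _ (List.map_congr_left fun i hi => effect_congr h ha hb (Or.inl hi))
  · exact congrArg _ (List.map_congr_left fun i hi => effect_congr h ha hb (Or.inr hi))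

end ATE

open ATE in
theorem matching_local_sensitivity_balanced
    {N : ℕ} (hN : 0 < N) {X : Type} [Fintype X] [DecidableEq X]
    {B : ℝ} (hB : 0 < B) (D : Dataset N X) (hD : Valid B D)
    (hbal : ∀ x : X, 0 < (Tlist D x).length + (Clist D x).length →
      (Tlist D x).length = (Clist D x).length ∧ 1 ≤ (Tlist D x).length) :
    LS B tauHat D ≤ 12 * B / (N : ℝ) := by
  have hNR : (0:ℝ) < N := by exact_mod_cast hN
  have h0 : (0:ℝ) ≤ 12 * B / N := by positivity
  refine Real.iSup_le ?_ h0
  rintro ⟨D', hD', hham⟩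
  simp only
  -- extract the index where D and D' differ
  rw [hammingDist] at hham
  obtain ⟨k, hk⟩ := Finset.card_eq_one.mp hham
  have hne : ∀ i : Fin N, D i ≠ D' i ↔ i = k := by
    intro i
    rw [show (i = k ↔ i ∈ ({k} : Finset (Fin N))) by simp, ← hk]
    simp
  have heq : ∀ i, i ≠ k → D i = D' i :=
    fun i hi => not_not.mp fun hh => hi ((hne i).mp hh)
  have heq' : ∀ i, i ≠ k → D' i = D i := fun i hi => (heq i hi).symm
  set a := (D k).2.2 with hadef
  set b := (D' k).2.2 with hbdef
  -- balance facts
  have hbal' : ∀ x, (Tlist D x).length = (Clist D x).length := by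
    intro x
    rcases Nat.eq_zero_or_pos ((Tlist D x).length + (Clist D x).length) with h | h
    · omega
    · exact (hbal x h).1
  -- error terms for D'
  set err : X → ℝ := fun x => SS D' x - 2 * ((TY D' x).sum - (CY D' x).sum) with herrdef
  have herr : ∀ x, |err x| ≤ 4 * B := by
    intro x
    have l1 := length_Tlist_le heq x
    have l2 := length_Tlist_le heq' x
    have l3 := length_Clist_le heq x
    have l4 := length_Clist_le heq' x
    have hb := hbal' x
    exact err_bound hB.le hD' x (by omega) (by omega) (by omega) (by omega)
  have hvanish : ∀ x, x ≠ a → x ≠ b → err x = 0 := by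
    intro x hxa hxb
    have ha : (D k).2.2 ≠ x := fun h => hxa h.symm
    have hb' : (D' k).2.2 ≠ x := fun h => hxb h.symm
    have hSS : SS D' x = SS D x := (SS_congr heq ha hb').symm
    have hTY : TY D' x = TY D x := (TY_congr heq ha hb').symm
    have hCY : CY D' x = CY D x := (CY_congr heq ha hb').symm
    rw [herrdef]
    simp only [hSS, hTY, hCY, SS_balanced (hbal x)]
    ring
  -- sum decompositions
  have hSd : ∑ i, effect D i = ∑ x, SS D x := partition D (effect D)
  have hSd' : ∑ i, effect D' i = ∑ x, SS D' x := partition D' (effect D')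
  have hDbal : ∑ x, SS D x = ∑ x, 2 * ((TY D x).sum - (CY D x).sum) :=
    Finset.sum_congr rfl fun x _ => SS_balanced (hbal x)
  have hD'split : ∑ x, SS D' x
      = ∑ x, 2 * ((TY D' x).sum - (CY D' x).sum) + ∑ x, err x := by
    rw [← Finset.sum_add_distrib]
    exact Finset.sum_congr rfl fun x _ => by rw [herrdef]; ring
  -- signed sums
  have hsgnD := sum_sgn D
  have hsgnD' := sum_sgn D'
  have hsgndiff : ∑ i, (if (D i).1 then Y D i else -(Y D i))
      - ∑ i, (if (D' i).1 then Y D' i else -(Y D' i))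
      = (if (D k).1 then Y D k else -(Y D k)) - (if (D' k).1 then Y D' k else -(Y D' k)) := by
    rw [← Finset.sum_sub_distrib]
    apply Finset.sum_eq_single k
    · intro i _ hik
      rw [Y, Y, heq i hik]
      ring
    · intro h
      exact absurd (Finset.mem_univ k) h
  have habs_sgn : |(if (D k).1 then Y D k else -(Y D k))
      - (if (D' k).1 then Y D' k else -(Y D' k))| ≤ 2 * B := by
    have b1 : |if (D k).1 then Y D k else -(Y D k)| ≤ B := by
      split <;> rw [abs_le] <;> constructor <;>
        simp only [neg_neg, neg_le, Y] <;> nlinarith [(hD k).1, (hD k).2]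
    have b2 : |if (D' k).1 then Y D' k else -(Y D' k)| ≤ B := by
      split <;> rw [abs_le] <;> constructor <;>
        simp only [neg_neg, neg_le, Y] <;> nlinarith [(hD' k).1, (hD' k).2]
    calc |_| ≤ _ + _ := abs_sub _ _
      _ ≤ 2 * B := by linarith
  -- error sum bound
  have herrsum : |∑ x, err x| ≤ 8 * B := by
    have hsub : ∑ x, err x = ∑ x ∈ ({a, b} : Finset X), err x := by
      refine (Finset.sum_subset (Finset.subset_univ _) fun x _ hx => ?_).symm
      simp only [Finset.mem_insert, Finset.mem_singleton, not_or] at hx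
      exact hvanish x hx.1 hx.2
    rw [hsub]
    calc |∑ x ∈ ({a, b} : Finset X), err x| ≤ ∑ x ∈ ({a, b} : Finset X), |err x| :=
          Finset.abs_sum_le_sum_abs _ _
      _ ≤ ({a, b} : Finset X).card • (4 * B) :=
          Finset.sum_le_card_nsmul _ _ _ fun x _ => herr x
      _ ≤ 2 * (4 * B) := by
          rw [nsmul_eq_mul]
          have hc : (({a, b} : Finset X).card : ℝ) ≤ 2 := by
            have := Finset.card_insert_le a ({b} : Finset X)
            simp only [Finset.card_singleton] at this
            exact_mod_cast this
          nlinarith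
      _ = 8 * B := by ring
  -- total bound
  have hkey : |∑ i, effect D i - ∑ i, effect D' i| ≤ 12 * B := by
    have : ∑ i, effect D i - ∑ i, effect D' i
        = 2 * ((∑ i, (if (D i).1 then Y D i else -(Y D i)))
            - ∑ i, (if (D' i).1 then Y D' i else -(Y D' i))) - ∑ x, err x := by
      rw [hSd, hSd', hDbal, hD'split, ← Finset.mul_sum, ← Finset.mul_sum, hsgnD, hsgnD']
      ring
    rw [this, hsgndiff]
    calc |_| ≤ |2 * ((if (D k).1 then Y D k else -(Y D k))
          - (if (D' k).1 then Y D' k else -(Y D' k)))| + |∑ x, err x| := abs_sub _ _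
      _ ≤ 2 * (2 * B) + 8 * B := by
          refine add_le_add ?_ herrsum
          rw [abs_mul]
          calc |(2:ℝ)| * _ = 2 * _ := by rw [abs_of_nonneg (by norm_num : (0:ℝ) ≤ 2)]
            _ ≤ 2 * (2 * B) := by linarith [habs_sgn]
      _ = 12 * B := by ring
  -- conclude
  rw [tauHat, tauHat, ← mul_sub, abs_mul,
    abs_of_nonneg (by positivity : (0:ℝ) ≤ 1 / (N:ℝ))]
  calc (1 / (N:ℝ)) * |∑ i, effect D i - ∑ i, effect D' i| ≤ (1 / (N:ℝ)) * (12 * B) :=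
        mul_le_mul_of_nonneg_left hkey (by positivity)
    _ = 12 * B / (N:ℝ) := by ring
end

section
/- Let f be a real-valued function on size-N datasets and β > 0, and suppose the β-smooth sensitivity S*_{f,β} is finite and strictly positive at every dataset. Then for any two neighboring datasets D and D′, S*_{f,β}(D) ≤ e^β · S*_{f,β}(D′). Equivalently, the global sensitivity of the function D ↦ ln S*_{f,β}(D) is at most β, i.e., |ln S*_{f,β}(D) − ln S*_{f,β}(D′)| ≤ β for all neighboring D, D′. -/
/-!
Statement 4: for a real-valued function `f` on size-`N` datasets and `β > 0`, if the
β-smooth sensitivity `S*_{f,β}` is finite (the defining supremum is attained as a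
bounded supremum) and strictly positive at every dataset, then for neighboring
datasets `D, D′`: `S*_{f,β}(D) ≤ e^β · S*_{f,β}(D′)`, equivalently
`|ln S*_{f,β}(D) − ln S*_{f,β}(D′)| ≤ β` (i.e. `ln S*_{f,β}` has global sensitivity ≤ β).
-/

namespace SmoothSens

variable {N : ℕ} {α : Type} [DecidableEq α]

/-- Local sensitivity of `f` at `D`: `sup` of `|f D − f D′|` over `D′` at Hamming
distance 1 from `D`. -/
noncomputable def LS (f : (Fin N → α) → ℝ) (D : Fin N → α) : ℝ :=
  ⨆ D' : {D' : Fin N → α // hammingDist D D' = 1}, |f D - f D'.1|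

/-- β-smooth sensitivity of `f` at `D`:
`S*_{f,β}(D) = sup over all D′ of LS_f(D′)·exp(−β·d(D,D′))`. -/
noncomputable def Sstar (f : (Fin N → α) → ℝ) (β : ℝ) (D : Fin N → α) : ℝ :=
  ⨆ D' : Fin N → α, LS f D' * Real.exp (-β * (hammingDist D D' : ℝ))

end SmoothSens

namespace SmoothSens

variable {N : ℕ} {α : Type} [DecidableEq α]

lemma LS_nonneg (f : (Fin N → α) → ℝ) (D : Fin N → α) : 0 ≤ LS f D := by
  unfold LS
  rcases isEmpty_or_nonempty {D' : Fin N → α // hammingDist D D' = 1} with h | h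
  · simp [iSup, Set.range_eq_empty, Real.sSup_empty]
  · by_cases hb : BddAbove (Set.range fun D' : {D' : Fin N → α // hammingDist D D' = 1} => |f D - f D'.1|)
    · obtain ⟨x⟩ := h
      exact le_trans (abs_nonneg _) (le_ciSup hb x)
    · rw [Real.iSup_of_not_bddAbove hb]

lemma key (f : (Fin N → α) → ℝ) {β : ℝ} (hβ : 0 < β)
    (hfin : ∀ D : Fin N → α,
      BddAbove (Set.range fun D' : Fin N → α =>
        LS f D' * Real.exp (-β * (hammingDist D D' : ℝ))))
    (D D' : Fin N → α) (h : hammingDist D D' = 1) :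
    Sstar f β D ≤ Real.exp β * Sstar f β D' := by
  have : Nonempty (Fin N → α) := ⟨D⟩
  unfold Sstar
  apply ciSup_le
  intro E
  have h1 : LS f E * Real.exp (-β * (hammingDist D E : ℝ)) ≤
      Real.exp β * (LS f E * Real.exp (-β * (hammingDist D' E : ℝ))) := by
    rw [mul_comm (Real.exp β), mul_assoc, ← Real.exp_add]
    apply mul_le_mul_of_nonneg_left _ (LS_nonneg f E)
    apply Real.exp_le_exp.2
    have htri : (hammingDist D' E : ℝ) ≤ 1 + (hammingDist D E : ℝ) := by
      have := hammingDist_triangle D' D E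
      rw [hammingDist_comm D' D, h] at this
      exact_mod_cast this
    nlinarith [hβ.le]
  refine h1.trans ?_
  apply mul_le_mul_of_nonneg_left _ (Real.exp_pos β).le
  exact le_ciSup (hfin D') E

end SmoothSens

open SmoothSens in
theorem smooth_sensitivity_log_global_sensitivity
    {N : ℕ} {α : Type} [DecidableEq α] (f : (Fin N → α) → ℝ) {β : ℝ} (hβ : 0 < β)
    (hfin : ∀ D : Fin N → α,
      BddAbove (Set.range fun D' : Fin N → α =>
        LS f D' * Real.exp (-β * (hammingDist D D' : ℝ))))
    (hpos : ∀ D : Fin N → α, 0 < Sstar f β D) :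
    ∀ D D' : Fin N → α, hammingDist D D' = 1 →
      Sstar f β D ≤ Real.exp β * Sstar f β D' ∧
      |Real.log (Sstar f β D) - Real.log (Sstar f β D')| ≤ β := by
  intro D D' h
  have h' : hammingDist D' D = 1 := by rw [hammingDist_comm]; exact h
  have k1 := key f hβ hfin D D' h
  have k2 := key f hβ hfin D' D h'
  refine ⟨k1, ?_⟩
  rw [abs_sub_le_iff]
  have l1 := Real.log_le_log (hpos D) k1
  have l2 := Real.log_le_log (hpos D') k2
  rw [Real.log_mul (Real.exp_ne_zero β) (hpos D').ne', Real.log_exp] at l1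
  rw [Real.log_mul (Real.exp_ne_zero β) (hpos D).ne', Real.log_exp] at l2
  exact ⟨by linarith, by linarith⟩
end
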